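/- arXiv:1601.05907 — 9 statements merged into one kernel-verified Lean document; each statement's English description precedes it below -/
import Mathlib

section
/- Let U ⊆ ℂ be a connected open set containing 0, and let h₁,…,h_r and k₁,…,k_s be holomorphic functions on U such that Σ_{σ=1}^r |h_σ(z)|² = Σ_{τ=1}^s |k_τ(z)|² for all z ∈ U. Then the polarized identity Σ_{σ=1}^r h_σ(z)·conj(h_σ(w)) = Σ_{τ=1}^s k_τ(z)·conj(k_τ(w)) holds for all z, w ∈ U. -/
/-!
Put `G (z, w) = ∑ h σ z * conj (h σ (conj w)) - ∑ k τ z * conj (k τ (conj w))`: it is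
holomorphic on `U × conj U` and vanishes on the totally real plane `{(z, conj z)}`. In the
coordinates `z = x + i y`, `w = x - i y` that plane becomes `ℝ × ℝ`, and a holomorphic function
of two variables vanishing on real points near a real point vanishes near it: apply the
one-variable identity theorem in each variable in turn. The identity theorem on the connected set
`U × conj U` then gives `G = 0`.
-/

open Complex ComplexConjugate Metric Filter Topology Set

section

variable {E : Type*} [NormedAddCommGroup E] [NormedSpace ℂ E]

theorem AnalyticOnNhd.eqOn_zero_of_eventually_ofReal {f : ℂ → E} {V : Set ℂ}
    (hf : AnalyticOnNhd ℂ f V) (hV : IsPreconnected V) {x₀ : ℝ} (hx₀ : (x₀ : ℂ) ∈ V)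
    (hzero : ∀ᶠ x : ℝ in 𝓝 x₀, f x = 0) : EqOn f 0 V := by
  have hreal : Tendsto ((↑) : ℝ → ℂ) (𝓝[≠] x₀) (𝓝[≠] (x₀ : ℂ)) :=
    continuous_ofReal.continuousWithinAt.tendsto_nhdsWithin fun _ hx => ofReal_injective.ne hx
  exact hf.eqOn_zero_of_preconnected_of_frequently_eq_zero hV hx₀
    (hreal.frequently (hzero.filter_mono nhdsWithin_le_nhds).frequently)

theorem eventuallyEq_zero_of_eventually_ofReal_prod {Φ : ℂ × ℂ → E} {x₀ y₀ : ℝ}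
    (hΦ : ∀ᶠ p in 𝓝 ((x₀ : ℂ), (y₀ : ℂ)), AnalyticAt ℂ Φ p)
    (hzero : ∀ᶠ p : ℝ × ℝ in 𝓝 (x₀, y₀), Φ (p.1, p.2) = 0) :
    Φ =ᶠ[𝓝 ((x₀ : ℂ), (y₀ : ℂ))] 0 := by
  obtain ⟨ε, hε, hΦε⟩ := eventually_nhds_iff_ball.1 hΦ
  rw [← ball_prod_same] at hΦε
  have hB : ∀ c : ℂ, IsPreconnected (ball c ε) := fun c => (convex_ball c ε).isPreconnected
  have hvert : ∀ᶠ x : ℝ in 𝓝 x₀, EqOn (fun ζ => Φ (x, ζ)) 0 (ball (y₀ : ℂ) ε) := by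
    have hx : ∀ᶠ x : ℝ in 𝓝 x₀, (x : ℂ) ∈ ball (x₀ : ℂ) ε :=
      continuous_ofReal.continuousAt.preimage_mem_nhds (ball_mem_nhds _ hε)
    rw [nhds_prod_eq] at hzero
    filter_upwards [hx, hzero.curry] with x hxB hxzero
    exact AnalyticOnNhd.eqOn_zero_of_eventually_ofReal
      (fun ζ hζ => (hΦε _ ⟨hxB, hζ⟩).comp (f := fun ζ => ((x : ℂ), ζ))
        (analyticAt_const.prod analyticAt_id))
      (hB _) (mem_ball_self hε) hxzero
  have hall : EqOn Φ 0 (ball (x₀ : ℂ) ε ×ˢ ball (y₀ : ℂ) ε) := by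
    rintro ⟨ξ, ζ⟩ ⟨hξ, hζ⟩
    exact AnalyticOnNhd.eqOn_zero_of_eventually_ofReal (f := fun ξ => Φ (ξ, ζ))
      (fun ξ' hξ' => (hΦε (ξ', ζ) ⟨hξ', hζ⟩).comp (f := fun ξ => (ξ, ζ))
        (analyticAt_id.prod analyticAt_const))
      (hB _) (mem_ball_self hε) (hvert.mono fun x hx => hx hζ) hξ
  rw [ball_prod_same] at hall
  exact eventually_of_mem (ball_mem_nhds _ hε) hall

theorem eventuallyEq_zero_of_eventually_conj {G : ℂ × ℂ → E} {z₀ : ℂ}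
    (hG : ∀ᶠ p in 𝓝 (z₀, conj z₀), AnalyticAt ℂ G p)
    (hzero : ∀ᶠ z in 𝓝 z₀, G (z, conj z) = 0) :
    G =ᶠ[𝓝 (z₀, conj z₀)] 0 := by
  -- `L` maps real pairs `(x, y)` to `(z, conj z)` with `z = x + y i`, and `M` inverts it.
  set L : ℂ × ℂ → ℂ × ℂ := fun p => (p.1 + p.2 * I, p.1 - p.2 * I)
  set M : ℂ × ℂ → ℂ × ℂ := fun p => ((p.1 + p.2) / 2, (p.1 - p.2) / (2 * I))
  have hLM : ∀ p, L (M p) = p := by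
    rintro ⟨a, b⟩
    simp only [L, M, Prod.mk.injEq]
    constructor <;> field_simp <;> ring
  have hL : Continuous L := by fun_prop
  have hL₀ : L ((z₀.re : ℂ), (z₀.im : ℂ)) = (z₀, conj z₀) := by
    rw [re_eq_add_conj, im_eq_sub_conj]
    exact hLM (z₀, conj z₀)
  have hM₀ : M (z₀, conj z₀) = ((z₀.re : ℂ), (z₀.im : ℂ)) := by
    rw [re_eq_add_conj, im_eq_sub_conj]
  have hΦ : ∀ᶠ p in 𝓝 ((z₀.re : ℂ), (z₀.im : ℂ)), AnalyticAt ℂ (G ∘ L) p := by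
    have hLan : ∀ p, AnalyticAt ℂ L p := fun p =>
      (analyticAt_fst.add (analyticAt_snd.mul analyticAt_const)).prod
        (analyticAt_fst.sub (analyticAt_snd.mul analyticAt_const))
    rw [← hL₀] at hG
    exact (hL.tendsto _).eventually hG |>.mono fun p hp => hp.comp (hLan p)
  have hreal :
      Tendsto (fun p : ℝ × ℝ => (p.1 : ℂ) + p.2 * I) (𝓝 (z₀.re, z₀.im)) (𝓝 z₀) := by
    have : Continuous fun p : ℝ × ℝ => (p.1 : ℂ) + p.2 * I := by fun_prop
    simpa [re_add_im] using this.tendsto (z₀.re, z₀.im)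
  have hΦzero : ∀ᶠ p : ℝ × ℝ in 𝓝 (z₀.re, z₀.im), (G ∘ L) (p.1, p.2) = 0 := by
    refine (hreal.eventually hzero).mono fun p hp => ?_
    convert hp using 3
    simp [L, conj_ofReal, sub_eq_add_neg]
  have hM : Tendsto M (𝓝 (z₀, conj z₀)) (𝓝 ((z₀.re : ℂ), (z₀.im : ℂ))) := by
    rw [← hM₀]
    exact (by fun_prop : Continuous M).tendsto _
  refine (hM.eventually (eventuallyEq_zero_of_eventually_ofReal_prod hΦ hΦzero)).mono
    fun p hp => ?_
  simpa [hLM] using hp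

end

/-- Evaluated at `(z, conj w)` this is `∑ i, f i z * conj (f i w)`; the conjugation in the second
slot makes it holomorphic in both variables. -/
noncomputable def polarization {ι : Type*} [Fintype ι] (f : ι → ℂ → ℂ) (p : ℂ × ℂ) : ℂ :=
  ∑ i, f i p.1 * conj (f i (conj p.2))

theorem polarization_apply_conj {ι : Type*} [Fintype ι] (f : ι → ℂ → ℂ) (z : ℂ) :
    polarization f (z, conj z) = ((∑ i, ‖f i z‖ ^ 2 : ℝ) : ℂ) := by
  simp only [polarization, conj_conj, mul_conj, ofReal_sum, ofReal_pow, normSq_eq_norm_sq]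

theorem DifferentiableOn.analyticOnNhd_conj_comp_conj {f : ℂ → ℂ} {U : Set ℂ}
    (hf : DifferentiableOn ℂ f U) (hU : IsOpen U) :
    AnalyticOnNhd ℂ (fun w => conj (f (conj w))) (conj ⁻¹' U) := by
  refine DifferentiableOn.analyticOnNhd (fun w hw => ?_) (hU.preimage continuous_conj)
  have := ((hf.differentiableAt (hU.mem_nhds hw)).conj_conj)
  rw [conj_conj] at this
  exact this.differentiableWithinAt

theorem analyticOnNhd_polarization {ι : Type*} [Fintype ι] {f : ι → ℂ → ℂ} {U : Set ℂ}
    (hU : IsOpen U) (hf : ∀ i, DifferentiableOn ℂ (f i) U) :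
    AnalyticOnNhd ℂ (polarization f) (U ×ˢ (conj ⁻¹' U)) := by
  refine Finset.analyticOnNhd_fun_sum _ fun i _ p hp => ?_
  exact (((hf i).analyticOnNhd hU _ hp.1).comp analyticAt_fst).mul
    (((hf i).analyticOnNhd_conj_comp_conj hU _ hp.2).comp analyticAt_snd)

/-- Polarization of an identity between sums of squared moduli of holomorphic functions. -/
theorem stmt_0 (U : Set ℂ) (hU : IsOpen U) (hUconn : IsConnected U) (h0 : (0 : ℂ) ∈ U)
    (r s : ℕ) (h : Fin r → ℂ → ℂ) (k : Fin s → ℂ → ℂ)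
    (hh : ∀ σ, DifferentiableOn ℂ (h σ) U) (hk : ∀ τ, DifferentiableOn ℂ (k τ) U)
    (heq : ∀ z ∈ U, ∑ σ, ‖h σ z‖ ^ 2 = ∑ τ, ‖k τ z‖ ^ 2) :
    ∀ z ∈ U, ∀ w ∈ U,
      ∑ σ, h σ z * (starRingEnd ℂ) (h σ w) = ∑ τ, k τ z * (starRingEnd ℂ) (k τ w) := by
  intro z hz w hw
  set G := polarization h - polarization k
  set S := conj ⁻¹' U
  have hG : AnalyticOnNhd ℂ G (U ×ˢ S) :=
    (analyticOnNhd_polarization hU hh).sub (analyticOnNhd_polarization hU hk)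
  have hS : IsPreconnected S :=
    conjCLE.toHomeomorph.isPreconnected_preimage.2 hUconn.isPreconnected
  have h0S : (0, conj 0) ∈ U ×ˢ S := ⟨h0, by simpa [S] using h0⟩
  have hdiag : ∀ᶠ z in 𝓝 0, G (z, conj z) = 0 :=
    eventually_of_mem (hU.mem_nhds h0) fun z hz => by
      simp [G, polarization_apply_conj, heq z hz]
  have hlocal : G =ᶠ[𝓝 (0, conj 0)] 0 :=
    eventuallyEq_zero_of_eventually_conj
      (eventually_of_mem ((hU.prod (hU.preimage continuous_conj)).mem_nhds h0S) hG) hdiag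
  have := hG.eqOn_zero_of_preconnected_of_eventuallyEq_zero (hUconn.isPreconnected.prod hS) h0S
    hlocal (⟨hz, by simpa [S] using hw⟩ : (z, conj w) ∈ U ×ˢ S)
  simpa [G, polarization, sub_eq_zero] using this
end

section
/- Let φ₀, a₁,…,a_r, b₁,…,b_s be holomorphic functions on a connected open neighborhood U of 0 in ℂ with a_i(0) = b_j(0) = 0 for all i, j. If Re(φ₀(z)) = Σ_{i=1}^r |a_i(z)|² − Σ_{j=1}^s |b_j(z)|² for all z ∈ U, then φ₀ is constant on U (with constant value a real number equal to 0 when additionally φ₀(0) = 0). -/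
/-!
Writing `2 Re φ = φ + conj φ` and `|a|² = a · conj a`, the hypothesis becomes an identity
`∑ₜ uₜ · conj vₜ = 0` between holomorphic functions `uₜ, vₜ`. Taking the `ℂ`-linear part of the
real derivative of such an identity and iterating gives `∑ₜ uₜ⁽ᵏ⁾ · conj vₜ = 0` for every `k`.
At `0` all `vₜ` coming from the `aᵢ, bⱼ` vanish, which leaves `φ⁽ᵏ⁾(0) = 0` for `k ≥ 1`;
so `φ` is constant near `0`, hence on `U` by the identity theorem.
-/

open Complex ComplexConjugate

section Sesquiholomorphic

variable {ι : Type*} [Fintype ι] {U : Set ℂ} {u v : ι → ℂ → ℂ}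

theorem sum_deriv_mul_conj_eq_zero (hU : IsOpen U)
    (hu : ∀ t, DifferentiableOn ℂ (u t) U) (hv : ∀ t, DifferentiableOn ℂ (v t) U)
    (h : ∀ z ∈ U, ∑ t, u t z * conj (v t z) = 0) :
    ∀ z ∈ U, ∑ t, deriv (u t) z * conj (v t z) = 0 := by
  intro z hz
  have hreal {f : ℂ → ℂ} (hf : DifferentiableOn ℂ f U) : HasFDerivAt f
      ((ContinuousLinearMap.smulRight (1 : ℂ →L[ℂ] ℂ) (deriv f z)).restrictScalars ℝ) z :=
    ((hf.differentiableAt (hU.mem_nhds hz)).hasDerivAt.hasFDerivAt).restrictScalars ℝ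
  have hsum := HasFDerivAt.fun_sum (u := Finset.univ) fun t _ ↦
    (hreal (hu t)).mul (hreal (hv t)).star
  have hzero : HasFDerivAt (fun z ↦ ∑ t, u t z * star (v t z)) (0 : ℂ →L[ℝ] ℂ) z :=
    (hasFDerivAt_const 0 z).congr_of_eventuallyEq
      (Filter.eventually_of_mem (hU.mem_nhds hz) h)
  -- The real derivative `w ↦ A w + B conj w` vanishes; testing it at `1` and `I` isolates `A`.
  have e1 := congrArg (· 1) (hsum.unique hzero)
  have eI := congrArg (· I) (hsum.unique hzero)
  simp only [RCLike.star_def, sum_apply, add_apply, smul_apply, ContinuousLinearMap.comp_apply,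
    ContinuousLinearMap.coe_restrictScalars', ContinuousLinearMap.smulRight_apply,
    one_apply_eq_self, smul_eq_mul, one_mul, ContinuousLinearEquiv.coe_coe, starL'_apply,
    zero_apply, star_mul', conj_I, neg_mul, mul_neg] at e1 eI
  calc ∑ t, deriv (u t) z * conj (v t z)
      = ∑ t, ((u t z * conj (deriv (v t) z) + conj (v t z) * deriv (u t) z)
          - I * (-(u t z * (I * conj (deriv (v t) z))) + conj (v t z) * (I * deriv (u t) z))) / 2 :=
        Finset.sum_congr rfl fun t _ ↦ by
          linear_combination (conj (v t z) * deriv (u t) z - u t z * conj (deriv (v t) z)) / 2 * I_sq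
    _ = 0 := by rw [← Finset.sum_div, Finset.sum_sub_distrib, ← Finset.mul_sum, e1, eI]; simp

theorem sum_iteratedDeriv_mul_conj_eq_zero (hU : IsOpen U)
    (hu : ∀ t, DifferentiableOn ℂ (u t) U) (hv : ∀ t, DifferentiableOn ℂ (v t) U)
    (h : ∀ z ∈ U, ∑ t, u t z * conj (v t z) = 0) (k : ℕ) :
    ∀ z ∈ U, ∑ t, iteratedDeriv k (u t) z * conj (v t z) = 0 := by
  induction k generalizing u with
  | zero => simpa using h
  | succ k ih =>
    simp only [iteratedDeriv_succ']
    exact ih (fun t ↦ (hu t).deriv hU) (sum_deriv_mul_conj_eq_zero hU hu hv h)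

end Sesquiholomorphic

theorem eventuallyEq_const_of_iteratedDeriv_eq_zero {f : ℂ → ℂ} {U : Set ℂ} {c : ℂ}
    (hU : IsOpen U) (hc : c ∈ U) (hf : DifferentiableOn ℂ f U)
    (h : ∀ k, iteratedDeriv (k + 1) f c = 0) : f =ᶠ[nhds c] fun _ ↦ f c := by
  obtain ⟨ε, hε, hball⟩ := Metric.isOpen_iff.mp hU c hc
  filter_upwards [Metric.ball_mem_nhds c hε] with z hz
  have hsingle := hasSum_single
    (f := fun n : ℕ ↦ (n.factorial : ℂ)⁻¹ • (z - c) ^ n • iteratedDeriv n f c) 0 fun n hn ↦ by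
    obtain ⟨k, rfl⟩ := Nat.exists_eq_succ_of_ne_zero hn
    simp [h k]
  simpa using (Complex.hasSum_taylorSeries_on_ball (hf.mono hball) hz).unique hsingle

/-- If `Re φ₀` equals a signed sum of squared moduli of holomorphic functions vanishing at `0`,
then `φ₀` is constant, equal to `0` when moreover `φ₀(0) = 0`. -/
theorem stmt_2 (U : Set ℂ) (hU : IsOpen U) (hUconn : IsConnected U) (h0 : (0 : ℂ) ∈ U)
    (r s : ℕ) (φ : ℂ → ℂ) (a : Fin r → ℂ → ℂ) (b : Fin s → ℂ → ℂ)
    (hφ : DifferentiableOn ℂ φ U)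
    (ha : ∀ i, DifferentiableOn ℂ (a i) U) (hb : ∀ j, DifferentiableOn ℂ (b j) U)
    (ha0 : ∀ i, a i 0 = 0) (hb0 : ∀ j, b j 0 = 0)
    (heq : ∀ z ∈ U,
      (φ z).re = ∑ i, ‖a i z‖ ^ 2 - ∑ j, ‖b j z‖ ^ 2) :
    (∀ z ∈ U, φ z = φ 0) ∧ (φ 0 = 0 → ∀ z ∈ U, φ z = 0) := by
  have hsesq : ∀ z ∈ U, φ z * conj 1 + 1 * conj (φ z)
      + ∑ i, -2 * a i z * conj (a i z) + ∑ j, 2 * b j z * conj (b j z) = 0 := by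
    intro z hz
    simp only [map_one, mul_one, one_mul, add_conj, heq z hz, mul_assoc, mul_conj',
      ← Finset.mul_sum]
    push_cast
    ring
  set u : Fin 2 ⊕ (Fin r ⊕ Fin s) → ℂ → ℂ :=
    Sum.elim ![φ, fun _ ↦ 1] (Sum.elim (fun i z ↦ -2 * a i z) fun j z ↦ 2 * b j z)
  set v : Fin 2 ⊕ (Fin r ⊕ Fin s) → ℂ → ℂ := Sum.elim ![fun _ ↦ 1, φ] (Sum.elim a b)
  have hu : ∀ t, DifferentiableOn ℂ (u t) U := by
    rintro (i | i | j)
    · fin_cases i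
      exacts [hφ, differentiableOn_const 1]
    · exact (ha i).const_mul _
    · exact (hb j).const_mul _
  have hv : ∀ t, DifferentiableOn ℂ (v t) U := by
    rintro (i | i | j)
    · fin_cases i
      exacts [differentiableOn_const 1, hφ]
    exacts [ha i, hb j]
  have hsum : ∀ z ∈ U, ∑ t, u t z * conj (v t z) = 0 := by
    simpa [u, v, Fintype.sum_sum_type, add_assoc] using hsesq
  have hderiv : ∀ k, iteratedDeriv (k + 1) φ 0 = 0 := fun k ↦ by
    simpa [u, v, Fintype.sum_sum_type, ha0, hb0, iteratedDeriv_const] using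
      sum_iteratedDeriv_mul_conj_eq_zero hU hu hv hsum (k + 1) 0 h0
  have hconst : ∀ z ∈ U, φ z = φ 0 := fun z hz ↦
    (hφ.analyticOnNhd hU).eqOn_of_preconnected_of_eventuallyEq analyticOnNhd_const
      hUconn.isPreconnected h0 (eventuallyEq_const_of_iteratedDeriv_eq_zero hU h0 hφ hderiv) hz
  exact ⟨hconst, fun hφ0 z hz ↦ (hconst z hz).trans hφ0⟩
end

section
/- There do not exist finitely many holomorphic functions f₁,…,f_m on a nonempty open subset U of ℂ such that Σ_{i=1}^m |f_i(z)|² = exp(|z|²) for all z ∈ U. -/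
/-!
Polarization: on a ball `B(c, 2r)` the identity `∑ |fᵢ(z)|² = exp (z z̄)` extends to
`∑ fᵢ(z) conj (fᵢ(w)) = exp (z w̄)` for `z, w ∈ B(c, r)` on a common vertical line, since
`v ↦ ∑ fᵢ(z₀ + v) conj (fᵢ(z₀ + v̄))` is holomorphic and agrees with `exp ((z₀ + v)(z̄₀ + v))`
for real `v`. Taking `m + 1` distinct such points `z_j`, the vectors `(fᵢ(z_j))ᵢ ∈ ℂᵐ` admit a
nontrivial relation `∑ g_j fᵢ(z_j) = 0`, so `∑_{j,k} g_j ḡ_k exp (z_j z̄_k) = 0`. But this form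
equals `∑ₙ |∑_j g_j z_jⁿ|² / n!`, so all power sums `∑_j g_j z_jⁿ` vanish, and then `g = 0`
by Vandermonde.
-/

open Complex ComplexConjugate Filter Topology Metric Set

section ExpKernel

variable {ι κ : Type*} [Fintype ι] [Fintype κ]

lemma hasSum_exp (x : ℂ) : HasSum (fun n : ℕ => x ^ n / n.factorial) (exp x) := by
  rw [exp_eq_exp_ℂ]
  exact NormedSpace.expSeries_div_hasSum_exp x

lemma sum_sum_mul_conj (a : ι → ℂ) :
    ∑ j, ∑ k, a j * conj (a k) = normSq (∑ j, a j) := by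
  rw [← mul_conj, map_sum, Finset.sum_mul_sum]

lemma sum_sum_mul_conj_mul_sum_mul_conj (g : κ → ℂ) (v : κ → ι → ℂ) :
    ∑ j, ∑ k, g j * conj (g k) * ∑ i, v j i * conj (v k i) =
      ∑ i, (normSq (∑ j, g j * v j i) : ℂ) := by
  simp_rw [← sum_sum_mul_conj, Finset.mul_sum]
  conv_rhs => rw [Finset.sum_comm]
  refine Finset.sum_congr rfl fun j _ => ?_
  rw [Finset.sum_comm]
  exact Finset.sum_congr rfl fun k _ => Finset.sum_congr rfl fun i _ => by rw [map_mul]; ring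

lemma hasSum_sum_sum_mul_conj_mul_exp (g z : ι → ℂ) :
    HasSum (fun n : ℕ => ((normSq (∑ j, g j * z j ^ n) / n.factorial : ℝ) : ℂ))
      (∑ j, ∑ k, g j * conj (g k) * exp (z j * conj (z k))) := by
  refine (hasSum_sum fun j _ => hasSum_sum fun k _ =>
    (hasSum_exp (z j * conj (z k))).mul_left (g j * conj (g k))).congr_fun fun n => ?_
  rw [ofReal_div, ← sum_sum_mul_conj, Finset.sum_div]
  push_cast
  refine Finset.sum_congr rfl fun j _ => ?_
  rw [Finset.sum_div]
  refine Finset.sum_congr rfl fun k _ => ?_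
  rw [map_mul, map_pow]
  ring

end ExpKernel

theorem eq_zero_of_sum_sum_mul_conj_mul_exp_eq_zero {n : ℕ} {z : Fin n → ℂ}
    (hz : Function.Injective z) {g : Fin n → ℂ}
    (h : ∑ j, ∑ k, g j * conj (g k) * exp (z j * conj (z k)) = 0) : g = 0 := by
  have hs := hasSum_sum_sum_mul_conj_mul_exp g z
  rw [h, ← ofReal_zero, hasSum_ofReal,
    hasSum_zero_iff_of_nonneg fun N => div_nonneg (normSq_nonneg _) N.factorial.cast_nonneg] at hs
  refine Matrix.eq_zero_of_forall_pow_sum_mul_pow_eq_zero hz fun N => ?_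
  simpa [Nat.factorial_ne_zero] using congrFun hs N

lemma tendsto_ofReal_nhdsNE_zero : Tendsto ((↑) : ℝ → ℂ) (𝓝[≠] 0) (𝓝[≠] 0) :=
  tendsto_nhdsWithin_of_tendsto_nhds_of_eventually_within _
    (continuous_ofReal.tendsto' 0 0 ofReal_zero |>.mono_left nhdsWithin_le_nhds)
    (eventually_mem_nhdsWithin.mono fun _ hx => ofReal_ne_zero.2 hx)

lemma eqOn_ball_of_forall_ofReal_eq {G H : ℂ → ℂ} {r : ℝ} (hr : 0 < r)
    (hG : DifferentiableOn ℂ G (ball 0 r)) (hH : DifferentiableOn ℂ H (ball 0 r))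
    (h : ∀ x : ℝ, |x| < r → G x = H x) : EqOn G H (ball 0 r) := by
  have hreal : ∀ᶠ x : ℝ in 𝓝[≠] 0, G x = H x := by
    filter_upwards [nhdsWithin_le_nhds (Ioo_mem_nhds (neg_lt_zero.2 hr) hr)] with x hx
    exact h x (abs_lt.2 hx)
  exact (hG.analyticOnNhd isOpen_ball).eqOn_of_preconnected_of_frequently_eq
    (hH.analyticOnNhd isOpen_ball) (convex_ball 0 r).isPreconnected (mem_ball_self hr)
    (tendsto_ofReal_nhdsNE_zero.frequently hreal.frequently)

section Polarization

variable {ι : Type*} [Fintype ι]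

lemma sum_mul_conj_eq_exp_of_mem_ball {f : ι → ℂ → ℂ} {z₀ : ℂ} {r : ℝ}
    (hf : ∀ i, DifferentiableOn ℂ (f i) (ball z₀ r))
    (hsum : ∀ z ∈ ball z₀ r, ∑ i, ‖f i z‖ ^ 2 = Real.exp (‖z‖ ^ 2))
    {u : ℂ} (hu : u ∈ ball 0 r) :
    ∑ i, f i (z₀ + u) * conj (f i (z₀ + conj u)) = exp ((z₀ + u) * (conj z₀ + u)) := by
  have hr : 0 < r := pos_of_mem_ball hu
  have hshift : ∀ v ∈ ball (0 : ℂ) r, z₀ + v ∈ ball z₀ r := fun v hv => by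
    simpa [dist_eq_norm] using hv
  have hf' : ∀ i, ∀ v ∈ ball (0 : ℂ) r, DifferentiableAt ℂ (fun w => f i (z₀ + w)) v :=
    fun i v hv => ((hf i).differentiableAt (isOpen_ball.mem_nhds (hshift v hv))).comp v
      (differentiableAt_id.const_add z₀)
  have hG : DifferentiableOn ℂ (fun v => ∑ i, f i (z₀ + v) * conj (f i (z₀ + conj v)))
      (ball 0 r) := fun v hv => by
    refine DifferentiableAt.differentiableWithinAt (DifferentiableAt.fun_sum fun i _ => ?_)
    have hv' : conj v ∈ ball (0 : ℂ) r := by simpa using hv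
    have hconj := (hf' i _ hv').conj_conj
    rw [conj_conj] at hconj
    exact (hf' i v hv).mul hconj
  have hH : Differentiable ℂ (fun v => exp ((z₀ + v) * (conj z₀ + v))) := by fun_prop
  refine eqOn_ball_of_forall_ofReal_eq hr hG hH.differentiableOn (fun x hx => ?_) hu
  have hx : z₀ + x ∈ ball z₀ r := hshift x (by simpa using hx)
  have hnorm (w : ℂ) : w * conj w = ((‖w‖ ^ 2 : ℝ) : ℂ) := by rw [mul_conj, normSq_eq_norm_sq]
  rw [conj_ofReal, show conj z₀ + x = conj (z₀ + x) by simp, hnorm, ← ofReal_exp, ← hsum _ hx]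
  simp only [ofReal_sum, hnorm]

lemma sum_mul_conj_eq_exp_mul_conj {f : ι → ℂ → ℂ} {c : ℂ} {r : ℝ}
    (hf : ∀ i, DifferentiableOn ℂ (f i) (ball c (2 * r)))
    (hsum : ∀ z ∈ ball c (2 * r), ∑ i, ‖f i z‖ ^ 2 = Real.exp (‖z‖ ^ 2))
    {z w : ℂ} (hz : z ∈ ball c r) (hw : w ∈ ball c r) (hre : z.re = w.re) :
    ∑ i, f i z * conj (f i w) = exp (z * conj w) := by
  rw [mem_ball_iff_norm] at hz hw
  have hu : (z - w) / 2 ∈ ball 0 r := by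
    rw [mem_ball_zero_iff, norm_div, RCLike.norm_two]
    linarith [norm_sub_le_norm_sub_add_norm_sub z c w, norm_sub_rev w c]
  have hsub : ball ((z + w) / 2) r ⊆ ball c (2 * r) := by
    refine ball_subset_ball' ?_
    rw [dist_eq_norm, show (z + w) / 2 - c = ((z - c) + (w - c)) / 2 by ring, norm_div,
      RCLike.norm_two]
    linarith [norm_add_le (z - c) (w - c)]
  have hconj : conj ((z - w) / 2) = -((z - w) / 2) := by
    rw [map_div₀, map_ofNat, ← neg_div, neg_sub, Complex.ext_iff]
    simp [hre, neg_add_eq_sub]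
  have hmid_add : (z + w) / 2 + (z - w) / 2 = z := by ring
  have hmid_sub : (z + w) / 2 + -((z - w) / 2) = w := by ring
  have hconj_mid : conj ((z + w) / 2) + (z - w) / 2 = conj w := by
    conv_rhs => rw [← hmid_sub, map_add, map_neg, hconj, neg_neg]
  have key := sum_mul_conj_eq_exp_of_mem_ball (fun i => (hf i).mono hsub)
    (fun z hz => hsum z (hsub hz)) hu
  rwa [hconj, hmid_add, hmid_sub, hconj_mid] at key

end Polarization

lemma exists_injective_mem_ball_re_eq (c : ℂ) {r : ℝ} (hr : 0 < r) (n : ℕ) :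
    ∃ z : Fin n → ℂ, Function.Injective z ∧ (∀ j, z j ∈ ball c r) ∧ ∀ j, (z j).re = c.re := by
  set t : Fin n → ℝ := fun j => r * j / (n + 1)
  have ht : StrictMono t := fun j k hjk => by
    simp only [t]
    gcongr
    exact_mod_cast hjk
  refine ⟨fun j => c + t j * I, fun j k hjk => ht.injective ?_, fun j => ?_, fun j => by simp⟩
  · simpa using congrArg im hjk
  · have htj : 0 ≤ t j := by positivity
    have htr : t j < r := by
      rw [div_lt_iff₀ (by positivity)]
      nlinarith [show (j : ℝ) < n by exact_mod_cast j.isLt]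
    simpa [dist_eq_norm, abs_of_nonneg htj] using htr

/-- `exp(|z|²)` is not a finite sum of squared moduli of holomorphic functions. -/
theorem stmt_3 : ¬ ∃ (m : ℕ) (f : Fin m → ℂ → ℂ) (U : Set ℂ),
    IsOpen U ∧ U.Nonempty ∧ (∀ i, DifferentiableOn ℂ (f i) U) ∧
    ∀ z ∈ U, ∑ i, ‖f i z‖ ^ 2 = Real.exp (‖z‖ ^ 2) := by
  rintro ⟨m, f, U, hU, ⟨c, hc⟩, hf, hsum⟩
  obtain ⟨ε, hε, hball⟩ := isOpen_iff.mp hU c hc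
  rw [← mul_div_cancel₀ ε two_ne_zero] at hball
  obtain ⟨z, hz, hz_mem, hz_re⟩ := exists_injective_mem_ball_re_eq c (half_pos hε) (m + 1)
  have hkernel (j k : Fin (m + 1)) :
      ∑ i, f i (z j) * conj (f i (z k)) = exp (z j * conj (z k)) :=
    sum_mul_conj_eq_exp_mul_conj (fun i => (hf i).mono hball) (fun w hw => hsum w (hball hw))
      (hz_mem j) (hz_mem k) ((hz_re j).trans (hz_re k).symm)
  have hdep : ¬ LinearIndependent ℂ fun j i => f i (z j) := fun hli => by
    simpa using hli.fintype_card_le_finrank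
  obtain ⟨g, hg, j, hj⟩ := Fintype.not_linearIndependent_iff.mp hdep
  have hrel (i : Fin m) : ∑ j, g j * f i (z j) = 0 := by simpa using congrFun hg i
  refine hj (congrFun (eq_zero_of_sum_sum_mul_conj_mul_exp_eq_zero hz ?_) j)
  simp_rw [← hkernel, sum_sum_mul_conj_mul_sum_mul_conj, hrel, map_zero, ofReal_zero,
    Finset.sum_const_zero]
end

section
/- There do not exist finitely many holomorphic functions χ₁,…,χ_n on a nonempty open subset U of the unit disc in ℂ and real numbers r₁,…,r_n such that Σ_{i=1}^n r_i |χ_i(z)|² = −log(1 − |z|²) for all z ∈ U. -/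
/-!
Polarization: `F (z, w) = ∑ i, rᵢ χᵢ(z) conj (χᵢ (conj w)) + log (1 - z w)` is holomorphic in
`(z, w)` and vanishes on the totally real set `w = conj z`. The real derivative of
`u ↦ G (u, conj u)` is `v ↦ ∂_z G v + ∂_w G (conj v)`, so the vanishing passes to every
`w`-derivative of `F` along `w = conj z`, and `F (z, ·)` vanishes identically. Hence
`∑ i, rᵢ χᵢ(z) conj (χᵢ u) = -log (1 - z conj u)` on a ball avoiding `0`, and the `n + 1`
functions `z ↦ log (1 - z conj uⱼ)`, for distinct points `uⱼ` of the ball, all lie in the span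
of `χ₁, …, χₙ`. But they are linearly independent: differentiating a vanishing combination
`∑ j, gⱼ log (1 - z cⱼ)` at a point `a` gives `∑ j, gⱼ tⱼ ^ (m + 1) = 0` for all `m`, where the
`tⱼ = cⱼ / (1 - a cⱼ)` are distinct and nonzero, and a Vandermonde determinant forbids this.
-/

open Complex ComplexConjugate Filter Metric Set Topology

section Calculus

variable {𝕜 : Type*} [NontriviallyNormedField 𝕜] {E : Type*} [NormedAddCommGroup E]
  [NormedSpace 𝕜 E]

theorem IsOpen.eq_zero_of_hasDerivAt_of_eq_zero {f f' : 𝕜 → E} {s : Set 𝕜} (hs : IsOpen s)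
    (hf : ∀ x ∈ s, HasDerivAt f (f' x) x) (h0 : ∀ x ∈ s, f x = 0) : ∀ x ∈ s, f' x = 0 :=
  fun x hx => (hf x hx).unique
    ((hasDerivAt_const x 0).congr_of_eventuallyEq (eventually_of_mem (hs.mem_nhds hx) h0))

theorem AnalyticAt.eventually_eq_zero_of_iteratedDeriv_eq_zero [CharZero 𝕜] [CompleteSpace E]
    {f : 𝕜 → E} {z : 𝕜} (hf : AnalyticAt 𝕜 f z) (h : ∀ n, iteratedDeriv n f z = 0) :
    ∀ᶠ w in 𝓝 z, f w = 0 :=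
  analyticOrderAt_eq_top.mp <| ENat.eq_top_iff_forall_ge.mpr fun _ =>
    (natCast_le_analyticOrderAt_iff_iteratedDeriv_eq_zero hf).mpr fun i _ => h i

noncomputable def derivSnd (F : 𝕜 × 𝕜 → E) (p : 𝕜 × 𝕜) : E := fderiv 𝕜 F p (0, 1)

theorem DifferentiableAt.hasDerivAt_derivSnd {F : 𝕜 × 𝕜 → E} {z w : 𝕜}
    (hF : DifferentiableAt 𝕜 F (z, w)) :
    HasDerivAt (fun v => F (z, v)) (derivSnd F (z, w)) w :=
  hF.hasFDerivAt.comp_hasDerivAt w ((hasDerivAt_const w z).prodMk (hasDerivAt_id w))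

theorem AnalyticOnNhd.iterate_derivSnd [CompleteSpace E] {F : 𝕜 × 𝕜 → E} {s : Set (𝕜 × 𝕜)}
    (hF : AnalyticOnNhd 𝕜 F s) (q : ℕ) : AnalyticOnNhd 𝕜 (derivSnd^[q] F) s := by
  induction q with
  | zero => exact hF
  | succ q ih =>
    rw [Function.iterate_succ_apply']
    exact fun p hp =>
      (ContinuousLinearMap.apply 𝕜 E ((0, 1) : 𝕜 × 𝕜)).analyticAt _ |>.comp (ih.fderiv p hp)

theorem AnalyticOnNhd.iterate_deriv_eq_derivSnd_iterate [CompleteSpace E] {F : 𝕜 × 𝕜 → E}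
    {V W : Set 𝕜} (hF : AnalyticOnNhd 𝕜 F (V ×ˢ W)) (hW : IsOpen W) {z : 𝕜} (hz : z ∈ V)
    (q : ℕ) : ∀ w ∈ W, deriv^[q] (fun v => F (z, v)) w = (derivSnd^[q] F) (z, w) := by
  induction q with
  | zero => simp
  | succ q ih =>
    intro w hw
    rw [Function.iterate_succ_apply', Function.iterate_succ_apply',
      EventuallyEq.deriv_eq (eventually_of_mem (hW.mem_nhds hw) ih)]
    exact (((hF.iterate_derivSnd q) (z, w) ⟨hz, hw⟩).differentiableAt.hasDerivAt_derivSnd).deriv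

end Calculus

section Polarization

theorem HasFDerivAt.apply_zero_one_eq_zero_of_eventually_eq_zero {G : ℂ × ℂ → ℂ}
    {L : ℂ × ℂ →L[ℂ] ℂ} {z : ℂ} (hG : HasFDerivAt G L (z, conj z))
    (h0 : ∀ᶠ u in 𝓝 z, G (u, conj u) = 0) : L (0, 1) = 0 := by
  have hcurve : HasFDerivAt (fun u : ℂ => (u, conj u))
      ((ContinuousLinearMap.id ℝ ℂ).prod conjCLE.toContinuousLinearMap) z :=
    ((ContinuousLinearMap.id ℝ ℂ).prod conjCLE.toContinuousLinearMap).hasFDerivAt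
  have hL : (L.restrictScalars ℝ).comp
      ((ContinuousLinearMap.id ℝ ℂ).prod conjCLE.toContinuousLinearMap) = 0 :=
    ((hG.restrictScalars ℝ).comp z hcurve).unique
      ((hasFDerivAt_const 0 z).congr_of_eventuallyEq h0)
  have hL' (v : ℂ) : v * L (1, 0) + conj v * L (0, 1) = 0 := by
    have := congr($hL v)
    rw [← smul_eq_mul, ← smul_eq_mul, ← L.map_smul, ← L.map_smul, ← L.map_add]
    simpa using this
  have h1 := hL' 1
  have hI := hL' I
  simp only [map_one, one_mul, conj_I] at h1 hI
  have : (2 * I) * L (0, 1) = 0 := by linear_combination I * h1 - hI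
  simpa [I_ne_zero] using this

variable {F : ℂ × ℂ → ℂ} {V W : Set ℂ}

theorem AnalyticOnNhd.iterate_derivSnd_eq_zero_of_antidiagonal
    (hF : AnalyticOnNhd ℂ F (V ×ˢ W)) (hV : IsOpen V) (hVW : ∀ z ∈ V, conj z ∈ W)
    (h0 : ∀ z ∈ V, F (z, conj z) = 0) (q : ℕ) : ∀ z ∈ V, (derivSnd^[q] F) (z, conj z) = 0 := by
  induction q with
  | zero => exact h0
  | succ q ih =>
    intro z hz
    rw [Function.iterate_succ_apply']
    exact ((hF.iterate_derivSnd q) _ ⟨hz, hVW z hz⟩).differentiableAt.hasFDerivAt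
      |>.apply_zero_one_eq_zero_of_eventually_eq_zero (eventually_of_mem (hV.mem_nhds hz) ih)

theorem AnalyticOnNhd.eq_zero_of_antidiagonal (hF : AnalyticOnNhd ℂ F (V ×ˢ W))
    (hV : IsOpen V) (hW : IsOpen W) (hW' : IsPreconnected W) (hVW : ∀ z ∈ V, conj z ∈ W)
    (h0 : ∀ z ∈ V, F (z, conj z) = 0) : ∀ z ∈ V, ∀ w ∈ W, F (z, w) = 0 := by
  intro z hz
  have hFz : AnalyticOnNhd ℂ (fun w => F (z, w)) W := fun w hw =>
    hF (z, w) ⟨hz, hw⟩ |>.comp (analyticAt_const.prod analyticAt_id)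
  have hderiv (q : ℕ) : iteratedDeriv q (fun w => F (z, w)) (conj z) = 0 := by
    rw [iteratedDeriv_eq_iterate, hF.iterate_deriv_eq_derivSnd_iterate hW hz q _ (hVW z hz)]
    exact hF.iterate_derivSnd_eq_zero_of_antidiagonal hV hVW h0 q z hz
  exact hFz.eqOn_zero_of_preconnected_of_eventuallyEq_zero hW' (hVW z hz)
    ((hFz _ (hVW z hz)).eventually_eq_zero_of_iteratedDeriv_eq_zero hderiv)

end Polarization

theorem conj_mem_ball_conj {a z : ℂ} {ε : ℝ} (hz : z ∈ ball a ε) : conj z ∈ ball (conj a) ε := by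
  rwa [mem_ball, dist_conj_conj]

theorem sum_mul_conj_eq_of_diagonal {ι : Type*} [Fintype ι] {χ : ι → ℂ → ℂ} (r : ι → ℂ)
    {K : ℂ × ℂ → ℂ} {a : ℂ} {ε : ℝ} (hχ : ∀ i, DifferentiableOn ℂ (χ i) (ball a ε))
    (hK : AnalyticOnNhd ℂ K (ball a ε ×ˢ ball (conj a) ε))
    (hdiag : ∀ z ∈ ball a ε, ∑ i, r i * χ i z * conj (χ i z) = K (z, conj z)) :
    ∀ z ∈ ball a ε, ∀ u ∈ ball a ε, ∑ i, r i * χ i z * conj (χ i u) = K (z, conj u) := by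
  have hχ' (i : ι) : AnalyticOnNhd ℂ (fun w => conj (χ i (conj w))) (ball (conj a) ε) :=
    DifferentiableOn.analyticOnNhd (fun w hw => (differentiableAt_conj_conj_iff.mpr
      ((hχ i).differentiableAt (isOpen_ball.mem_nhds (by simpa using conj_mem_ball_conj hw))))
        |>.differentiableWithinAt) isOpen_ball
  have hF : AnalyticOnNhd ℂ (fun p : ℂ × ℂ => ∑ i, r i * χ i p.1 * conj (χ i (conj p.2)) - K p)
      (ball a ε ×ˢ ball (conj a) ε) := by
    intro p hp
    refine (Finset.analyticAt_fun_sum _ fun i _ => (analyticAt_const.mul ?_).mul ?_).sub (hK p hp)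
    · exact ((hχ i).analyticOnNhd isOpen_ball p.1 hp.1).comp analyticAt_fst
    · exact (hχ' i p.2 hp.2).comp analyticAt_snd
  intro z hz u hu
  simpa [sub_eq_zero] using hF.eq_zero_of_antidiagonal isOpen_ball isOpen_ball
    (convex_ball _ _).isPreconnected (fun z hz => conj_mem_ball_conj hz)
    (fun z hz => by simpa [sub_eq_zero] using hdiag z hz) z hz (conj u) (conj_mem_ball_conj hu)

theorem LinearIndependent.card_le_card_of_forall_mem_span {K M : Type*} [DivisionRing K]
    [AddCommGroup M] [Module K M] {ι κ : Type*} [Fintype ι] [Fintype κ] {v : ι → M} {b : κ → M}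
    (hv : LinearIndependent K v) (h : ∀ i, v i ∈ Submodule.span K (range b)) :
    Fintype.card ι ≤ Fintype.card κ := by
  have := FiniteDimensional.span_of_finite K (finite_range b)
  have hv' : LinearIndependent K fun i => (⟨v i, h i⟩ : Submodule.span K (range b)) :=
    .of_comp (Submodule.span K (range b)).subtype hv
  exact hv'.fintype_card_le_finrank.trans (finrank_range_le_card b)

theorem one_sub_mul_mem_slitPlane {z w : ℂ} (hz : ‖z‖ < 1) (hw : ‖w‖ < 1) :
    1 - z * w ∈ slitPlane := by
  simpa [sub_eq_add_neg] using mem_slitPlane_of_norm_lt_one (z := -(z * w))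
    (by simpa using mul_lt_one_of_nonneg_of_lt_one_left (norm_nonneg z) hz hw.le)

theorem analyticOnNhd_neg_log_one_sub_mul :
    AnalyticOnNhd ℂ (fun p : ℂ × ℂ => -log (1 - p.1 * p.2)) (ball 0 1 ×ˢ ball 0 1) := by
  rintro ⟨z, w⟩ ⟨hz, hw⟩
  rw [mem_ball_zero_iff] at hz hw
  exact ((analyticAt_const.sub (analyticAt_fst.mul analyticAt_snd)).clog
    (one_sub_mul_mem_slitPlane hz hw)).neg

theorem neg_log_one_sub_mul_conj {z : ℂ} (hz : ‖z‖ < 1) :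
    -log (1 - z * conj z) = ((-Real.log (1 - ‖z‖ ^ 2) : ℝ) : ℂ) := by
  have : 0 ≤ 1 - ‖z‖ ^ 2 := by nlinarith [norm_nonneg z]
  rw [mul_conj', ofReal_neg, ofReal_log this, ofReal_sub, ofReal_one, ofReal_pow]

theorem hasDerivAt_log_one_sub_mul {c z : ℂ} (h : 1 - z * c ∈ slitPlane) :
    HasDerivAt (fun z => log (1 - z * c)) (-(c / (1 - z * c))) z := by
  simpa [neg_div] using ((hasDerivAt_mul_const c).const_sub 1).clog h

theorem hasDerivAt_div_one_sub_mul_pow {c z : ℂ} (h : 1 - z * c ≠ 0) (m : ℕ) :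
    HasDerivAt (fun z => (c / (1 - z * c)) ^ (m + 1))
      ((m + 1) * (c / (1 - z * c)) ^ (m + 2)) z := by
  have hbase : HasDerivAt (fun z => c / (1 - z * c)) ((c / (1 - z * c)) ^ 2) z := by
    refine ((hasDerivAt_const z c).div ((hasDerivAt_mul_const c).const_sub 1) h).congr_deriv ?_
    field_simp
    ring
  refine (hbase.pow (m + 1)).congr_deriv ?_
  push_cast
  ring

theorem sum_mul_div_one_sub_mul_pow_eq_zero {ι : Type*} [Fintype ι] {V : Set ℂ} (hV : IsOpen V)
    {g c : ι → ℂ} (hslit : ∀ z ∈ V, ∀ j, 1 - z * c j ∈ slitPlane)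
    (h : ∀ z ∈ V, ∑ j, g j * log (1 - z * c j) = 0) (m : ℕ) :
    ∀ z ∈ V, ∑ j, g j * (c j / (1 - z * c j)) ^ (m + 1) = 0 := by
  induction m with
  | zero =>
    have := hV.eq_zero_of_hasDerivAt_of_eq_zero (fun z hz => HasDerivAt.fun_sum fun j _ =>
      (hasDerivAt_log_one_sub_mul (hslit z hz j)).const_mul (g j)) h
    intro z hz
    simpa using this z hz
  | succ m ih =>
    have := hV.eq_zero_of_hasDerivAt_of_eq_zero (fun z hz => HasDerivAt.fun_sum fun j _ =>
      (hasDerivAt_div_one_sub_mul_pow (slitPlane_ne_zero (hslit z hz j)) m).const_mul (g j)) ih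
    intro z hz
    have hm : ((m : ℂ) + 1) * ∑ j, g j * (c j / (1 - z * c j)) ^ (m + 2) = 0 := by
      rw [Finset.mul_sum, ← this z hz]
      exact Finset.sum_congr rfl fun j _ => by ring
    exact (mul_eq_zero.mp hm).resolve_left (Nat.cast_add_one_ne_zero m)

theorem linearIndependent_log_one_sub_mul {k : ℕ} {V : Set ℂ} (hV : IsOpen V)
    (hVne : V.Nonempty) {c : Fin k → ℂ} (hc : Function.Injective c) (hc0 : ∀ j, c j ≠ 0)
    (hslit : ∀ z ∈ V, ∀ j, 1 - z * c j ∈ slitPlane) :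
    LinearIndependent ℂ fun j (z : V) => log (1 - z * c j) := by
  obtain ⟨a, ha⟩ := hVne
  rw [Fintype.linearIndependent_iff]
  intro g hg
  have hsum (z : ℂ) (hz : z ∈ V) : ∑ j, g j * log (1 - z * c j) = 0 := by
    simpa using congr_fun hg ⟨z, hz⟩
  have hne (j : Fin k) : 1 - a * c j ≠ 0 := slitPlane_ne_zero (hslit a ha j)
  set t := fun j => c j / (1 - a * c j)
  have ht : Function.Injective t := by
    intro i j hij
    simp only [t, div_eq_div_iff (hne i) (hne j)] at hij
    exact hc (by linear_combination hij)
  have hgt : (fun j => g j * t j) = 0 :=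
    Matrix.eq_zero_of_forall_pow_sum_mul_pow_eq_zero ht fun m => by
      simpa [t, pow_succ', mul_assoc] using
        sum_mul_div_one_sub_mul_pow_eq_zero hV hslit hsum m a ha
  intro j
  simpa [t, hc0 j, hne j] using congr_fun hgt j

theorem not_forall_sum_mul_conj_eq_neg_log {ι : Type*} [Fintype ι] (r : ι → ℂ) (χ : ι → ℂ → ℂ)
    {V : Set ℂ} (hV : IsOpen V) (hVne : V.Nonempty) (hV1 : V ⊆ ball 0 1) (hV0 : 0 ∉ V) :
    ¬ ∀ z ∈ V, ∀ u ∈ V, ∑ i, r i * χ i z * conj (χ i u) = -log (1 - z * conj u) := by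
  intro hpol
  obtain ⟨a, ha⟩ := id hVne
  have hV1' (z : ℂ) (hz : z ∈ V) : ‖z‖ < 1 := mem_ball_zero_iff.mp (hV1 hz)
  let u : Fin (Fintype.card ι + 1) ↪ V :=
    Fin.valEmbedding.trans ((infinite_of_mem_nhds a (hV.mem_nhds ha)).natEmbedding V)
  have hli := linearIndependent_log_one_sub_mul hV hVne (c := fun j => conj (u j : ℂ))
    (fun i j hij => u.injective (Subtype.ext ((starRingEnd ℂ).injective hij)))
    (fun j => by simpa using ne_of_mem_of_not_mem (u j).2 hV0)
    fun z hz j => one_sub_mul_mem_slitPlane (hV1' z hz) (by simpa using hV1' _ (u j).2)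
  have hspan (j : Fin (Fintype.card ι + 1)) : (fun z : V => log (1 - z * conj (u j : ℂ))) ∈
      Submodule.span ℂ (range fun i (z : V) => χ i z) := by
    refine (Submodule.mem_span_range_iff_exists_fun ℂ).mpr ⟨fun i => -(r i * conj (χ i (u j))), ?_⟩
    ext z
    simp only [Finset.sum_apply, Pi.smul_apply, smul_eq_mul]
    rw [← neg_neg (log _), ← hpol z z.2 _ (u j).2, ← Finset.sum_neg_distrib]
    exact Finset.sum_congr rfl fun i _ => by ring
  simpa using hli.card_le_card_of_forall_mem_span hspan

/-- `−log(1−|z|²)` is not a finite real linear combination of squared moduli of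
holomorphic functions on an open subset of the unit disc. -/
theorem stmt_4 : ¬ ∃ (n : ℕ) (χ : Fin n → ℂ → ℂ) (r : Fin n → ℝ) (U : Set ℂ),
    IsOpen U ∧ U.Nonempty ∧ U ⊆ Metric.ball (0 : ℂ) 1 ∧
    (∀ i, DifferentiableOn ℂ (χ i) U) ∧
    ∀ z ∈ U, ∑ i, r i * ‖χ i z‖ ^ 2 = -Real.log (1 - ‖z‖ ^ 2) := by
  rintro ⟨n, χ, r, U, hUo, hUne, hU1, hχ, heq⟩
  obtain ⟨a, haU, ha0⟩ : ∃ a ∈ U, a ≠ 0 :=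
    (dense_compl_singleton (0 : ℂ)).inter_open_nonempty U hUo hUne
  obtain ⟨ε, hε, hball⟩ := isOpen_iff.mp (hUo.sdiff isClosed_singleton) a ⟨haU, ha0⟩
  have hV1 : ball a ε ⊆ ball 0 1 := fun z hz => hU1 (hball hz).1
  have hK : AnalyticOnNhd ℂ (fun p : ℂ × ℂ => -log (1 - p.1 * p.2)) (ball a ε ×ˢ ball (conj a) ε) :=
    analyticOnNhd_neg_log_one_sub_mul.mono <| prod_mono hV1 fun w hw => by
      simpa using @hV1 (conj w) (by simpa using conj_mem_ball_conj hw)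
  refine not_forall_sum_mul_conj_eq_neg_log (fun i => (r i : ℂ)) χ isOpen_ball
    (nonempty_ball.mpr hε) hV1 (fun h => (hball h).2 rfl) ?_
  refine sum_mul_conj_eq_of_diagonal _ (fun i => (hχ i).mono fun z hz => (hball hz).1) hK ?_
  intro z hz
  rw [neg_log_one_sub_mul_conj (mem_ball_zero_iff.mp (hV1 hz)), ← heq z (hball hz).1]
  push_cast
  simp [mul_assoc, mul_conj']
end

section
/- There do not exist finitely many holomorphic functions h₁,…,h_r, k₁,…,k_s on a nonempty open subset U of ℂ such that log(1 + |z|²) = Σ_{σ=1}^r |h_σ(z)|² − Σ_{τ=1}^s |k_τ(z)|² for all z ∈ U. -/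
/-!
Write `∂ = ∂/∂z` and `∂̄ = ∂/∂z̄`. For holomorphic `fᵢ`,
`∂ᵐ ∂̄ⁿ (∑ cᵢ |fᵢ|²) = ∑ cᵢ fᵢ⁽ᵐ⁾ conj fᵢ⁽ⁿ⁾`, so the matrix `(∂ᵐ⁺¹ ∂̄ⁿ⁺¹ F (0))` of such an `F`
has rank at most the number of the `fᵢ`. For `F = log (1 + |z|²)` one finds
`∂̄ⁿ⁺¹ F = (-1)ⁿ n! uⁿ⁺¹` with `u = z / (1 + |z|²)`, and since `∂u = (1 - z̄ u)²` the operator `∂`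
acts on powers of `u` as `d/du` modulo multiples of `z̄`; hence this matrix is diagonal with
nonzero entries `(-1)ⁿ n! (n+1)!`, of full rank.

To move a point `a` of `U` to `0`, substitute `z ↦ (z + a) / (1 - ā z)`: this changes
`log (1 + |z|²)` by `log |1 - ā z|² - log (1 + |a|²) = 2 Re v` with `v` holomorphic, and
`2 Re v = |1 + v|² / 2 - |1 - v|² / 2`.
-/

open Complex Set
open scoped ContDiff ComplexConjugate

noncomputable section

/-- `(∂ₓ f + e ∂ᵧ f) / 2`: `e = -I` gives `∂/∂z` and `e = I` gives `∂/∂z̄`. -/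
def wirtinger (e : ℂ) (f : ℂ → ℂ) (z : ℂ) : ℂ :=
  (fderiv ℝ f z 1 + e * fderiv ℝ f z I) / 2

local notation "∂" => wirtinger (-I)

local notation "∂̄" => wirtinger I

section Wirtinger

variable {e : ℂ} {f g : ℂ → ℂ} {z : ℂ}

theorem wirtinger_of_hasFDerivAt {L : ℂ →L[ℝ] ℂ} (h : HasFDerivAt f L z) :
    wirtinger e f z = (L 1 + e * L I) / 2 := by
  rw [wirtinger, h.fderiv]

theorem Set.EqOn.wirtinger {Ω : Set ℂ} (hΩ : IsOpen Ω) (h : EqOn f g Ω) :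
    EqOn (wirtinger e f) (wirtinger e g) Ω := fun z hz => by
  rw [_root_.wirtinger, _root_.wirtinger, (h.eventuallyEq_of_mem (hΩ.mem_nhds hz)).fderiv_eq]

theorem wirtinger_const_add (c : ℂ) : wirtinger e (fun w => c + f w) z = wirtinger e f z := by
  simp only [wirtinger, fderiv_const_add]

theorem wirtinger_add (hf : DifferentiableAt ℝ f z) (hg : DifferentiableAt ℝ g z) :
    wirtinger e (fun w => f w + g w) z = wirtinger e f z + wirtinger e g z := by
  rw [wirtinger_of_hasFDerivAt (hf.hasFDerivAt.fun_add hg.hasFDerivAt), wirtinger, wirtinger]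
  simp only [add_apply]
  ring

theorem wirtinger_mul (hf : DifferentiableAt ℝ f z) (hg : DifferentiableAt ℝ g z) :
    wirtinger e (fun w => f w * g w) z = wirtinger e f z * g z + f z * wirtinger e g z := by
  rw [wirtinger_of_hasFDerivAt (hf.hasFDerivAt.fun_mul hg.hasFDerivAt), wirtinger, wirtinger]
  simp only [add_apply, smul_apply, smul_eq_mul]
  ring

theorem wirtinger_const_mul (c : ℂ) (hf : DifferentiableAt ℝ f z) :
    wirtinger e (fun w => c * f w) z = c * wirtinger e f z := by
  rw [wirtinger_mul (differentiableAt_const c) hf,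
    wirtinger_of_hasFDerivAt (hasFDerivAt_const c z)]
  simp

theorem wirtinger_sum {ι : Type*} (s : Finset ι) {F : ι → ℂ → ℂ}
    (hF : ∀ i ∈ s, DifferentiableAt ℝ (F i) z) :
    wirtinger e (fun w => ∑ i ∈ s, F i w) z = ∑ i ∈ s, wirtinger e (F i) z := by
  rw [wirtinger_of_hasFDerivAt (HasFDerivAt.fun_sum fun i hi => (hF i hi).hasFDerivAt)]
  simp only [FunLike.coe_sum, Finset.sum_apply, wirtinger, Finset.mul_sum,
    ← Finset.sum_add_distrib, Finset.sum_div]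

theorem wirtinger_comp {F : ℂ → ℂ} (hF : DifferentiableAt ℂ F (f z))
    (hf : DifferentiableAt ℝ f z) :
    wirtinger e (fun w => F (f w)) z = deriv F (f z) * wirtinger e f z := by
  have hc : HasFDerivAt (fun w => F (f w)) _ z :=
    (hF.hasDerivAt.hasFDerivAt.restrictScalars ℝ).comp z hf.hasFDerivAt
  rw [wirtinger_of_hasFDerivAt hc, wirtinger]
  simp only [ContinuousLinearMap.comp_apply, ContinuousLinearMap.coe_restrictScalars',
    ContinuousLinearMap.toSpanSingleton_apply, smul_eq_mul]
  ring

theorem wirtinger_pow (hf : DifferentiableAt ℝ f z) (n : ℕ) :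
    wirtinger e (fun w => f w ^ n) z = n * f z ^ (n - 1) * wirtinger e f z := by
  rw [wirtinger_comp (differentiableAt_pow n) hf, deriv_pow_field]

theorem wirtinger_of_differentiableAt (hf : DifferentiableAt ℂ f z) :
    wirtinger e f z = deriv f z * ((1 + e * I) / 2) := by
  have h := wirtinger_comp (e := e) (f := fun w => w) hf differentiableAt_id
  have hid : HasFDerivAt (fun w : ℂ => w) (ContinuousLinearMap.id ℝ ℂ) z := hasFDerivAt_id z
  rw [wirtinger_of_hasFDerivAt hid] at h
  simpa using h

theorem wirtinger_conj_comp (hf : DifferentiableAt ℂ f z) :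
    wirtinger e (fun w => conj (f w)) z = conj (deriv f z) * ((1 - e * I) / 2) := by
  have hc : HasFDerivAt (fun w => conj (f w)) _ z :=
    conjCLE.hasFDerivAt.comp z (hf.hasDerivAt.hasFDerivAt.restrictScalars ℝ)
  rw [wirtinger_of_hasFDerivAt hc]
  simp only [ContinuousLinearMap.comp_apply, ContinuousLinearMap.coe_restrictScalars',
    ContinuousLinearMap.toSpanSingleton_apply, smul_eq_mul, one_mul,
    ContinuousLinearEquiv.coe_coe, ContinuousAlgEquiv.coeCLE_apply, conjCAE_apply, map_mul,
    conj_I]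
  ring

theorem dz_of_differentiableAt (hf : DifferentiableAt ℂ f z) : ∂ f z = deriv f z := by
  rw [wirtinger_of_differentiableAt hf]
  simp

theorem dzbar_of_differentiableAt (hf : DifferentiableAt ℂ f z) : ∂̄ f z = 0 := by
  rw [wirtinger_of_differentiableAt hf]
  simp

theorem dz_conj_comp (hf : DifferentiableAt ℂ f z) : ∂ (fun w => conj (f w)) z = 0 := by
  rw [wirtinger_conj_comp hf]
  simp

theorem dzbar_conj_comp (hf : DifferentiableAt ℂ f z) :
    ∂̄ (fun w => conj (f w)) z = conj (deriv f z) := by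
  rw [wirtinger_conj_comp hf]
  simp

theorem dz_id : ∂ (fun w : ℂ => w) z = 1 := by
  rw [dz_of_differentiableAt (f := fun w => w) differentiableAt_id, deriv_id'']

theorem dzbar_id : ∂̄ (fun w : ℂ => w) z = 0 :=
  dzbar_of_differentiableAt differentiableAt_id

theorem DifferentiableAt.conj (hf : DifferentiableAt ℂ f z) :
    DifferentiableAt ℝ (fun w => conj (f w)) z :=
  (hf.restrictScalars ℝ).star

theorem differentiableAt_mul_conj (hf : DifferentiableAt ℂ f z) (hg : DifferentiableAt ℂ g z) :
    DifferentiableAt ℝ (fun w => f w * conj (g w)) z :=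
  (hf.restrictScalars ℝ).mul hg.conj

theorem dz_mul_conj (hf : DifferentiableAt ℂ f z) (hg : DifferentiableAt ℂ g z) :
    ∂ (fun w => f w * conj (g w)) z = deriv f z * conj (g z) := by
  rw [wirtinger_mul (hf.restrictScalars ℝ) hg.conj, dz_of_differentiableAt hf,
    dz_conj_comp hg, mul_zero, add_zero]

theorem dzbar_mul_conj (hf : DifferentiableAt ℂ f z) (hg : DifferentiableAt ℂ g z) :
    ∂̄ (fun w => f w * conj (g w)) z = f z * conj (deriv g z) := by
  rw [wirtinger_mul (hf.restrictScalars ℝ) hg.conj, dzbar_of_differentiableAt hf,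
    dzbar_conj_comp hg, zero_mul, zero_add]

theorem contDiff_conj : ContDiff ℝ ∞ (fun w : ℂ => conj w) :=
  conjCLE.contDiff

theorem contDiff_wirtinger (hf : ContDiff ℝ ∞ f) : ContDiff ℝ ∞ (wirtinger e f) := by
  have hd : ContDiff ℝ ∞ (fderiv ℝ f) := hf.fderiv_right (by simp)
  unfold wirtinger
  fun_prop

end Wirtinger

open Matrix in
theorem Matrix.rank_of_sum_mul_conj_le {m ι : Type*} [Fintype m] [Fintype ι] (c : ι → ℂ)
    (a : m → ι → ℂ) :
    (Matrix.of fun p q => ∑ i, c i * (a p i * conj (a q i))).rank ≤ Fintype.card ι := by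
  classical
  have h : (Matrix.of fun p q => ∑ i, c i * (a p i * conj (a q i)))
      = Matrix.of a * Matrix.diagonal c * (Matrix.of a)ᴴ := by
    ext p q
    rw [mul_apply]
    simp only [mul_diagonal, of_apply, conjTranspose_apply, star_def]
    exact Finset.sum_congr rfl fun i _ => by ring
  rw [h]
  exact ((rank_mul_le_left _ _).trans (rank_mul_le_left _ _)).trans (rank_le_card_width _)

theorem Set.EqOn.iterate {α β : Type*} {s : Set α} {op : (α → β) → α → β}
    (hop : ∀ {u v}, EqOn u v s → EqOn (op u) (op v) s) {T : ℕ → α → β}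
    (hT : ∀ k, EqOn (op (T k)) (T (k + 1)) s) {F : α → β} (hF : EqOn F (T 0) s) (n : ℕ) :
    EqOn (op^[n] F) (T n) s := by
  induction n with
  | zero => exact hF
  | succ n ih =>
    rw [Function.iterate_succ_apply']
    exact (hop ih).trans (hT n)

section Sesquilinear

theorem differentiableAt_iterate_deriv {F : ℂ → ℂ} {Ω : Set ℂ} {z : ℂ} (hΩ : IsOpen Ω)
    (hF : DifferentiableOn ℂ F Ω) (m : ℕ) (hz : z ∈ Ω) : DifferentiableAt ℂ (deriv^[m] F) z :=
  ((hF.analyticOnNhd hΩ).iterated_deriv m z hz).differentiableAt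

variable {ι : Type*} [Fintype ι]

def sesqSum (c : ι → ℂ) (f : ι → ℂ → ℂ) (m n : ℕ) (w : ℂ) : ℂ :=
  ∑ i, c i * (deriv^[m] (f i) w * conj (deriv^[n] (f i) w))

variable {Ω : Set ℂ} {c : ι → ℂ} {f : ι → ℂ → ℂ}

theorem dz_sesqSum (hΩ : IsOpen Ω) (hf : ∀ i, DifferentiableOn ℂ (f i) Ω) (m n : ℕ) :
    EqOn (∂ (sesqSum c f m n)) (sesqSum c f (m + 1) n) Ω := fun z hz => by
  have hd i k := differentiableAt_iterate_deriv hΩ (hf i) k hz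
  have hdd i := differentiableAt_mul_conj (hd i m) (hd i n)
  unfold sesqSum
  rw [wirtinger_sum _ fun i _ => (hdd i).const_mul (c i)]
  refine Finset.sum_congr rfl fun i _ => ?_
  rw [wirtinger_const_mul _ (hdd i), dz_mul_conj (hd i m) (hd i n),
    Function.iterate_succ_apply']

theorem dzbar_sesqSum (hΩ : IsOpen Ω) (hf : ∀ i, DifferentiableOn ℂ (f i) Ω) (m n : ℕ) :
    EqOn (∂̄ (sesqSum c f m n)) (sesqSum c f m (n + 1)) Ω := fun z hz => by
  have hd i k := differentiableAt_iterate_deriv hΩ (hf i) k hz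
  have hdd i := differentiableAt_mul_conj (hd i m) (hd i n)
  unfold sesqSum
  rw [wirtinger_sum _ fun i _ => (hdd i).const_mul (c i)]
  refine Finset.sum_congr rfl fun i _ => ?_
  rw [wirtinger_const_mul _ (hdd i), dzbar_mul_conj (hd i m) (hd i n),
    Function.iterate_succ_apply']

theorem eqOn_iterate_dz_iterate_dzbar (hΩ : IsOpen Ω) (hf : ∀ i, DifferentiableOn ℂ (f i) Ω)
    {F : ℂ → ℂ} (hF : EqOn F (sesqSum c f 0 0) Ω) (m n : ℕ) :
    EqOn (∂^[m] (∂̄^[n] F)) (sesqSum c f m n) Ω :=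
  EqOn.iterate (fun h => h.wirtinger hΩ) (fun k => dz_sesqSum hΩ hf k n)
    (EqOn.iterate (fun h => h.wirtinger hΩ) (dzbar_sesqSum hΩ hf 0) hF n) m

end Sesquilinear

section LogOneAddNormSq

open scoped Nat

def logOneAddNormSq (z : ℂ) : ℂ := Real.log (1 + ‖z‖ ^ 2)

def zOverOneAddNormSq (z : ℂ) : ℂ := z * (1 + z * conj z)⁻¹

local notation "u" => zOverOneAddNormSq

variable {e z : ℂ}

theorem one_add_mul_conj_eq (z : ℂ) : 1 + z * conj z = ((1 + ‖z‖ ^ 2 : ℝ) : ℂ) := by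
  rw [mul_conj, Complex.sq_norm]
  push_cast
  rfl

theorem one_add_mul_conj_ne_zero (z : ℂ) : 1 + z * conj z ≠ 0 := by
  rw [one_add_mul_conj_eq]
  exact_mod_cast (by positivity : (0 : ℝ) < 1 + ‖z‖ ^ 2).ne'

theorem one_add_mul_conj_mem_slitPlane (z : ℂ) : 1 + z * conj z ∈ slitPlane := by
  rw [one_add_mul_conj_eq, ofReal_mem_slitPlane]
  positivity

theorem logOneAddNormSq_eq : logOneAddNormSq = fun z => log (1 + z * conj z) := by
  ext z
  rw [logOneAddNormSq, one_add_mul_conj_eq, ofReal_log (by positivity)]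

theorem differentiableAt_one_add_mul_conj :
    DifferentiableAt ℝ (fun w : ℂ => 1 + w * conj w) z :=
  (differentiableAt_mul_conj differentiableAt_id differentiableAt_id).const_add 1

theorem dz_one_add_mul_conj : ∂ (fun w : ℂ => 1 + w * conj w) z = conj z := by
  rw [wirtinger_const_add,
    dz_mul_conj (f := fun w => w) (g := fun w => w) differentiableAt_id differentiableAt_id]
  simp

theorem dzbar_one_add_mul_conj : ∂̄ (fun w : ℂ => 1 + w * conj w) z = z := by
  rw [wirtinger_const_add,
    dzbar_mul_conj (f := fun w => w) (g := fun w => w) differentiableAt_id differentiableAt_id]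
  simp

theorem dzbar_logOneAddNormSq : ∂̄ logOneAddNormSq z = u z := by
  have hlog := differentiableAt_log (one_add_mul_conj_mem_slitPlane z)
  rw [logOneAddNormSq_eq,
    wirtinger_comp (F := log) (f := fun w => 1 + w * conj w) hlog
      differentiableAt_one_add_mul_conj,
    deriv_log (one_add_mul_conj_mem_slitPlane z), dzbar_one_add_mul_conj, zOverOneAddNormSq,
    mul_comm]

theorem wirtinger_inv_one_add_mul_conj :
    wirtinger e (fun w : ℂ => (1 + w * conj w)⁻¹) z
      = -(1 + z * conj z)⁻¹ ^ 2 * wirtinger e (fun w : ℂ => 1 + w * conj w) z := by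
  have hinv := differentiableAt_inv (𝕜 := ℂ) (one_add_mul_conj_ne_zero z)
  rw [wirtinger_comp (F := fun w => w⁻¹) (f := fun w => 1 + w * conj w) hinv
    differentiableAt_one_add_mul_conj, deriv_inv, inv_pow]

theorem wirtinger_zOverOneAddNormSq :
    wirtinger e u z = wirtinger e (fun w => w) z * (1 + z * conj z)⁻¹
      - z * (1 + z * conj z)⁻¹ ^ 2 * wirtinger e (fun w : ℂ => 1 + w * conj w) z := by
  have hinv : DifferentiableAt ℝ (fun w : ℂ => (1 + w * conj w)⁻¹) z :=
    differentiableAt_one_add_mul_conj.inv (one_add_mul_conj_ne_zero z)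
  unfold zOverOneAddNormSq
  rw [wirtinger_mul (f := fun w => w) differentiableAt_id hinv, wirtinger_inv_one_add_mul_conj]
  ring

theorem dz_zOverOneAddNormSq : ∂ u z = (1 - conj z * u z) ^ 2 := by
  have := one_add_mul_conj_ne_zero z
  rw [wirtinger_zOverOneAddNormSq, dz_one_add_mul_conj, dz_id, zOverOneAddNormSq]
  field_simp
  ring

theorem dzbar_zOverOneAddNormSq : ∂̄ u z = -u z ^ 2 := by
  rw [wirtinger_zOverOneAddNormSq, dzbar_one_add_mul_conj, dzbar_id, zOverOneAddNormSq]
  ring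

theorem contDiff_zOverOneAddNormSq : ContDiff ℝ ∞ u :=
  contDiff_id.mul ((contDiff_const.add (contDiff_id.mul contDiff_conj)).inv
    one_add_mul_conj_ne_zero)

theorem differentiable_zOverOneAddNormSq : Differentiable ℝ u :=
  contDiff_zOverOneAddNormSq.differentiable (by simp)

theorem zOverOneAddNormSq_zero : u 0 = 0 := by
  simp [zOverOneAddNormSq]

theorem iterate_dzbar_logOneAddNormSq (n : ℕ) :
    ∂̄^[n + 1] logOneAddNormSq = fun z => (-1) ^ n * n ! * u z ^ (n + 1) := by
  induction n with
  | zero =>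
    funext z
    simp [dzbar_logOneAddNormSq]
  | succ n ih =>
    rw [Function.iterate_succ_apply', ih]
    funext z
    rw [wirtinger_const_mul _ ((differentiable_zOverOneAddNormSq z).fun_pow _),
      wirtinger_pow (differentiable_zOverOneAddNormSq z), dzbar_zOverOneAddNormSq,
      Nat.factorial_succ]
    push_cast
    ring

theorem exists_iterate_dz_const_mul_zOverOneAddNormSq_pow (C : ℂ) (n m : ℕ) :
    ∃ g : ℂ → ℂ, ContDiff ℝ ∞ g ∧ ∂^[m] (fun z => C * u z ^ n)
      = fun z => C * n.descFactorial m * u z ^ (n - m) + conj z * g z := by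
  induction m with
  | zero => exact ⟨0, contDiff_const, by simp⟩
  | succ m ih =>
    obtain ⟨g, hg, hm⟩ := ih
    have hu := contDiff_zOverOneAddNormSq
    have hc := contDiff_conj
    have hdg := contDiff_wirtinger (e := -I) hg
    refine ⟨fun z => C * n.descFactorial m * (n - m : ℕ) * u z ^ (n - m - 1)
      * (conj z * u z ^ 2 - 2 * u z) + ∂ g z, by fun_prop, ?_⟩
    rw [Function.iterate_succ_apply', hm]
    funext z
    have hdu := differentiable_zOverOneAddNormSq z
    have hdc : DifferentiableAt ℝ (fun w : ℂ => conj w) z := hc.differentiable (by simp) z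
    have hdg : DifferentiableAt ℝ g z := hg.differentiable (by simp) z
    rw [wirtinger_add ((hdu.fun_pow _).const_mul _) (hdc.fun_mul hdg),
      wirtinger_const_mul _ (hdu.fun_pow _), wirtinger_pow hdu, dz_zOverOneAddNormSq,
      wirtinger_mul hdc hdg, dz_conj_comp (f := fun w => w) differentiableAt_id,
      Nat.descFactorial_succ, Nat.sub_sub]
    push_cast
    ring

theorem iterate_dz_iterate_dzbar_logOneAddNormSq_zero (m n : ℕ) :
    ∂^[m + 1] (∂̄^[n + 1] logOneAddNormSq) 0
      = if m = n then (-1 : ℂ) ^ n * n ! * (n + 1)! else 0 := by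
  obtain ⟨g, -, hg⟩ :=
    exists_iterate_dz_const_mul_zOverOneAddNormSq_pow ((-1 : ℂ) ^ n * n !) (n + 1) (m + 1)
  rw [iterate_dzbar_logOneAddNormSq, hg]
  simp only [zOverOneAddNormSq_zero, map_zero, zero_mul, add_zero]
  rcases lt_trichotomy m n with h | rfl | h
  · rw [zero_pow (by omega), mul_zero, if_neg h.ne]
  · rw [Nat.descFactorial_self, Nat.sub_self, pow_zero, mul_one, if_pos rfl]
  · rw [Nat.descFactorial_eq_zero_iff_lt.mpr (by omega), Nat.cast_zero, mul_zero, zero_mul,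
      if_neg h.ne']

end LogOneAddNormSq

def IsSignedSumSqOn (F : ℂ → ℝ) (Ω : Set ℂ) : Prop :=
  ∃ (ι : Type) (_ : Fintype ι) (c : ι → ℝ) (f : ι → ℂ → ℂ),
    (∀ i, DifferentiableOn ℂ (f i) Ω) ∧ ∀ z ∈ Ω, F z = ∑ i, c i * ‖f i z‖ ^ 2

open scoped Nat in
theorem not_isSignedSumSqOn_logOneAddNormSq {Ω : Set ℂ} (hΩ : IsOpen Ω) (h0 : 0 ∈ Ω) :
    ¬ IsSignedSumSqOn (fun z => Real.log (1 + ‖z‖ ^ 2)) Ω := by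
  rintro ⟨ι, _, c, f, hf, hfΩ⟩
  have hL : EqOn logOneAddNormSq (sesqSum (fun i => (c i : ℂ)) f 0 0) Ω := fun z hz => by
    have h : Real.log (1 + ‖z‖ ^ 2) = ∑ i, c i * ‖f i z‖ ^ 2 := hfΩ z hz
    simp only [logOneAddNormSq, h, sesqSum, Function.iterate_zero_apply, mul_conj,
      ← Complex.sq_norm]
    push_cast
    rfl
  let N := Fintype.card ι + 1
  let B : Matrix (Fin N) (Fin N) ℂ :=
    Matrix.of fun p q => ∂^[p + 1] (∂̄^[q + 1] logOneAddNormSq) 0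
  have hdiag :
      B = Matrix.diagonal fun p : Fin N => (-1 : ℂ) ^ (p : ℕ) * (p : ℕ)! * (p + 1 : ℕ)! := by
    ext p q
    simp only [B, Matrix.of_apply]
    rw [iterate_dz_iterate_dzbar_logOneAddNormSq_zero, Matrix.diagonal_apply]
    simp only [Fin.val_inj]
    split_ifs with h <;> simp [h]
  have hrank : B.rank = N := by
    rw [hdiag, Matrix.rank_diagonal]
    simp [Nat.factorial_ne_zero]
  have hsesq : B = Matrix.of fun p q : Fin N =>
      ∑ i, (c i : ℂ) * (deriv^[p + 1] (f i) 0 * conj (deriv^[q + 1] (f i) 0)) := by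
    ext p q
    exact eqOn_iterate_dz_iterate_dzbar hΩ hf hL _ _ h0
  have hle := Matrix.rank_of_sum_mul_conj_le (fun i => (c i : ℂ))
    fun (p : Fin N) i => deriv^[p + 1] (f i) 0
  rw [← hsesq, hrank] at hle
  omega

section Moebius

theorem sq_norm_one_sub_conj_mul_add_sq_norm_add (a z : ℂ) :
    ‖1 - conj a * z‖ ^ 2 + ‖z + a‖ ^ 2 = (1 + ‖a‖ ^ 2) * (1 + ‖z‖ ^ 2) := by
  have h : ((‖1 - conj a * z‖ ^ 2 + ‖z + a‖ ^ 2 : ℝ) : ℂ)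
      = (((1 + ‖a‖ ^ 2) * (1 + ‖z‖ ^ 2) : ℝ) : ℂ) := by
    push_cast
    simp only [← mul_conj', map_sub, map_add, map_mul, map_one, conj_conj]
    ring
  exact_mod_cast h

theorem log_one_add_sq_norm_eq_moebius {a z : ℂ} (hd : 1 - conj a * z ≠ 0) :
    Real.log (1 + ‖z‖ ^ 2) = Real.log (1 + ‖(z + a) / (1 - conj a * z)‖ ^ 2)
      - Real.log (1 + ‖a‖ ^ 2) + 2 * (log (1 - conj a * z)).re := by
  have hd' : 0 < ‖1 - conj a * z‖ ^ 2 := by positivity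
  have h : 1 + ‖(z + a) / (1 - conj a * z)‖ ^ 2
      = (1 + ‖a‖ ^ 2) * (1 + ‖z‖ ^ 2) / ‖1 - conj a * z‖ ^ 2 := by
    rw [← sq_norm_one_sub_conj_mul_add_sq_norm_add, norm_div, div_pow, add_div,
      div_self hd'.ne']
  rw [h, Real.log_div (by positivity) hd'.ne', Real.log_mul (by positivity) (by positivity),
    log_re, Real.log_pow]
  push_cast
  ring

theorem two_mul_re_eq (w : ℂ) : 2 * w.re = ‖1 + w‖ ^ 2 / 2 - ‖1 - w‖ ^ 2 / 2 := by
  simp only [Complex.sq_norm, normSq_apply, add_re, sub_re, add_im, sub_im, one_re, one_im]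
  ring

theorem IsSignedSumSqOn.exists_zero_mem {U : Set ℂ} (hU : IsOpen U) {a : ℂ} (ha : a ∈ U)
    (hsum : IsSignedSumSqOn (fun z => Real.log (1 + ‖z‖ ^ 2)) U) :
    ∃ Ω, IsOpen Ω ∧ 0 ∈ Ω ∧ IsSignedSumSqOn (fun z => Real.log (1 + ‖z‖ ^ 2)) Ω := by
  obtain ⟨ι, _, c, f, hf, hfU⟩ := hsum
  let S : Set ℂ := {z | 0 < (1 - conj a * z).re}
  let moeb : ℂ → ℂ := fun z => (z + a) / (1 - conj a * z)
  let v : ℂ → ℂ := fun z => log (1 - conj a * z) - (Real.log (1 + ‖a‖ ^ 2) / 2 : ℝ)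
  have hd : ∀ z ∈ S, 1 - conj a * z ≠ 0 := fun z (hz : 0 < (1 - conj a * z).re) h => by
    rw [h, zero_re] at hz
    exact lt_irrefl 0 hz
  have hS : IsOpen S := isOpen_lt continuous_const (by fun_prop)
  have hmoeb : DifferentiableOn ℂ moeb S :=
    (differentiableOn_id.add_const a).div (by fun_prop) hd
  have hv : DifferentiableOn ℂ v S :=
    (DifferentiableOn.clog (by fun_prop) fun z hz => Or.inl hz).sub_const _
  refine ⟨S ∩ moeb ⁻¹' U, hmoeb.continuousOn.isOpen_inter_preimage hS hU,
    ⟨by simp [S], by simpa [moeb] using ha⟩, Fin 2 ⊕ ι, inferInstance,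
    Sum.elim ![1 / 2, -1 / 2] c,
    Sum.elim ![fun z => 1 + v z, fun z => 1 - v z] fun i z => f i (moeb z), ?_, ?_⟩
  · refine Sum.forall.2 ⟨Fin.forall_fin_two.2 ⟨?_, ?_⟩, fun i => ?_⟩
    · exact (hv.const_add 1).mono inter_subset_left
    · exact ((differentiableOn_const 1).sub hv).mono inter_subset_left
    · exact (hf i).comp (hmoeb.mono inter_subset_left) fun z hz => hz.2
  · rintro z ⟨hzS, hzU⟩
    have hmoebius := log_one_add_sq_norm_eq_moebius (hd z hzS)
    have hre := two_mul_re_eq (v z)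
    have hsumU : Real.log (1 + ‖moeb z‖ ^ 2) = ∑ i, c i * ‖f i (moeb z)‖ ^ 2 := hfU _ hzU
    simp only [v, sub_re, ofReal_re] at hre
    simp only [Fintype.sum_sum_type, Fin.sum_univ_two, Sum.elim_inl, Sum.elim_inr,
      Matrix.cons_val_zero, Matrix.cons_val_one]
    rw [hmoebius, ← hsumU]
    linarith

end Moebius

/-- `log(1+|z|²)` is not a difference of finite sums of squared moduli of
holomorphic functions. -/
theorem stmt_5 : ¬ ∃ (r s : ℕ) (h : Fin r → ℂ → ℂ) (k : Fin s → ℂ → ℂ) (U : Set ℂ),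
    IsOpen U ∧ U.Nonempty ∧
    (∀ σ, DifferentiableOn ℂ (h σ) U) ∧ (∀ τ, DifferentiableOn ℂ (k τ) U) ∧
    ∀ z ∈ U, Real.log (1 + ‖z‖ ^ 2)
      = ∑ σ, ‖h σ z‖ ^ 2 - ∑ τ, ‖k τ z‖ ^ 2 := by
  rintro ⟨r, s, h, k, U, hU, ⟨a, ha⟩, hh, hk, hid⟩
  have hsum : IsSignedSumSqOn (fun z => Real.log (1 + ‖z‖ ^ 2)) U :=
    ⟨Fin r ⊕ Fin s, inferInstance, Sum.elim 1 (-1), Sum.elim h k, Sum.forall.2 ⟨hh, hk⟩,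
      fun z hz => by simp [hid z hz, Fintype.sum_sum_type, sub_eq_add_neg]⟩
  obtain ⟨Ω, hΩ, h0, hΩsum⟩ := hsum.exists_zero_mem hU ha
  exact not_isSignedSumSqOn_logOneAddNormSq hΩ h0 hΩsum
end
end

section
/- Let r be a positive integer and suppose holomorphic functions f₀, f₁, …, f_N on a neighborhood of 0 in ℂ satisfy (1 + |z|²)^r = Σ_{i=0}^N |f_i(z)|² for all z in that neighborhood. Then N ≥ r. -/
open Complex ComplexConjugate Filter Metric Topology

/-!
Polarization: with `gᵢ = conj ∘ fᵢ ∘ conj`, the function `∑ᵢ fᵢ z * gᵢ w - (1 + z * w) ^ r` is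
holomorphic in `(z, w)` near the origin and vanishes on the totally real set `w = conj z`, hence
vanishes identically there. At `r + 1` distinct points `pⱼ` the matrix `((1 + pⱼ pₖ) ^ r)` thus
factors through `ℂ^(N+1)`; by the binomial theorem it is `V * diag (r.choose m) * Vᵀ` with `V`
Vandermonde, so it is invertible and `r + 1 ≤ N + 1`.
-/

namespace Complex

theorem eqOn_zero_of_forall_ofReal {g : ℂ → ℂ} {δ : ℝ} (hg : DifferentiableOn ℂ g (ball 0 δ))
    (hreal : ∀ x : ℝ, |x| < δ → g x = 0) : Set.EqOn g 0 (ball 0 δ) := by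
  rcases le_or_gt δ 0 with hδ | hδ
  · simp [ball_eq_empty.2 hδ]
  have hofReal : Tendsto ((↑) : ℝ → ℂ) (𝓝[≠] 0) (𝓝[≠] 0) := by
    have := (continuous_ofReal.continuousWithinAt (x := 0)).tendsto_nhdsWithin (t := {0}ᶜ)
      fun x (hx : x ∈ ({0}ᶜ : Set ℝ)) => ofReal_ne_zero.2 hx
    rwa [ofReal_zero] at this
  have hfreq : ∃ᶠ z in 𝓝[≠] (0 : ℂ), g z = 0 := by
    refine hofReal.frequently (Eventually.frequently ?_)
    filter_upwards [nhdsWithin_le_nhds (Ioo_mem_nhds (neg_lt_zero.2 hδ) hδ)] with x hx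
    exact hreal x (abs_lt.2 hx)
  exact (hg.analyticOnNhd isOpen_ball).eqOn_zero_of_preconnected_of_frequently_eq_zero
    (convex_ball 0 δ).isPreconnected (mem_ball_self hδ) hfreq

theorem eq_zero_of_forall_ofReal₂ {G : ℂ → ℂ → ℂ} {δ : ℝ}
    (hG₁ : ∀ w ∈ ball (0 : ℂ) δ, DifferentiableOn ℂ (G · w) (ball 0 δ))
    (hG₂ : ∀ z ∈ ball (0 : ℂ) δ, DifferentiableOn ℂ (G z) (ball 0 δ))
    (hreal : ∀ x y : ℝ, |x| < δ → |y| < δ → G x y = 0) :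
    ∀ z ∈ ball (0 : ℂ) δ, ∀ w ∈ ball (0 : ℂ) δ, G z w = 0 := by
  have hrealRight : ∀ y : ℝ, |y| < δ → ∀ z ∈ ball (0 : ℂ) δ, G z y = 0 := fun y hy =>
    eqOn_zero_of_forall_ofReal (hG₁ y (by simpa using hy)) fun x hx => hreal x y hx hy
  exact fun z hz => eqOn_zero_of_forall_ofReal (hG₂ z hz) fun y hy => hrealRight y hy z hz

theorem eq_zero_of_forall_apply_conj_eq_zero {F : ℂ → ℂ → ℂ} {ε : ℝ}
    (hF : DifferentiableOn ℂ (Function.uncurry F) (ball 0 ε ×ˢ ball 0 ε))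
    (hconj : ∀ z ∈ ball (0 : ℂ) ε, F z (conj z) = 0) :
    ∀ z ∈ ball (0 : ℂ) (ε / 2), ∀ w ∈ ball (0 : ℂ) (ε / 2), F z w = 0 := by
  have hmem : ∀ s ∈ ball (0 : ℂ) (ε / 2), ∀ t ∈ ball (0 : ℂ) (ε / 2),
      (s + I * t, s - I * t) ∈ ball (0 : ℂ) ε ×ˢ ball 0 ε := by
    intro s hs t ht
    simp only [Set.mem_prod, mem_ball_zero_iff] at hs ht ⊢
    have hIt : ‖I * t‖ = ‖t‖ := by simp
    constructor
    · linarith [norm_add_le s (I * t)]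
    · linarith [norm_sub_le s (I * t)]
  -- `(s, t) ↦ (s + I t, s - I t)` carries the real points onto `{(z, conj z)}`
  have hG := eq_zero_of_forall_ofReal₂ (G := fun s t => F (s + I * t) (s - I * t)) (δ := ε / 2)
    (fun t ht => hF.comp (by fun_prop) fun s hs => hmem s hs t ht)
    (fun s hs => hF.comp (by fun_prop) fun t ht => hmem s hs t ht)
    (fun x y hx hy => by
      have hxy : ((x : ℂ) + I * y, (x : ℂ) - I * y) ∈ ball (0 : ℂ) ε ×ˢ ball 0 ε :=
        hmem x (by simpa using hx) y (by simpa using hy)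
      have hconj_xy : conj ((x : ℂ) + I * y) = x - I * y := by simp [sub_eq_add_neg]
      simpa [hconj_xy] using hconj _ hxy.1)
  intro z hz w hw
  have hs : (z + w) / 2 ∈ ball (0 : ℂ) (ε / 2) := by
    rw [mem_ball_zero_iff] at hz hw ⊢
    rw [norm_div, RCLike.norm_ofNat]
    linarith [norm_add_le z w]
  have ht : I * (w - z) / 2 ∈ ball (0 : ℂ) (ε / 2) := by
    rw [mem_ball_zero_iff] at hz hw ⊢
    rw [norm_div, norm_mul, norm_I, RCLike.norm_ofNat]
    linarith [norm_sub_le w z]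
  convert hG _ hs _ ht using 2
  · linear_combination (z - w) / 2 * I_sq
  · linear_combination (w - z) / 2 * I_sq

end Complex

namespace Matrix

variable {K : Type*} [Field K]

theorem card_le_card_of_det_mul_ne_zero {m n : Type*} [Fintype m] [Fintype n] [DecidableEq m]
    (A : Matrix m n K) (B : Matrix n m K) (h : (A * B).det ≠ 0) :
    Fintype.card m ≤ Fintype.card n :=
  calc Fintype.card m = (A * B).rank :=
        (rank_of_isUnit _ ((isUnit_iff_isUnit_det _).2 h.isUnit)).symm
    _ ≤ A.rank := rank_mul_le_left A B
    _ ≤ Fintype.card n := rank_le_card_width A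

theorem det_of_one_add_mul_pow_ne_zero [CharZero K] {r : ℕ} {p : Fin (r + 1) → K}
    (hp : Function.Injective p) : (of fun j k => (1 + p j * p k) ^ r).det ≠ 0 := by
  have hfactor : (of fun j k => (1 + p j * p k) ^ r) =
      vandermonde p * diagonal (fun m : Fin (r + 1) => (r.choose m : K)) * (vandermonde p)ᵀ := by
    ext j k
    rw [of_apply, mul_apply]
    simp only [mul_diagonal, transpose_apply, vandermonde_apply]
    rw [add_comm, add_pow, ← Fin.sum_univ_eq_sum_range]
    exact Finset.sum_congr rfl fun m _ => by ring
  have hV : (vandermonde p).det ≠ 0 := det_vandermonde_ne_zero_iff.2 hp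
  rw [hfactor, det_mul, det_mul, det_transpose, det_diagonal]
  refine mul_ne_zero (mul_ne_zero hV (Finset.prod_ne_zero_iff.2 fun m _ => ?_)) hV
  exact_mod_cast (Nat.choose_pos (Nat.lt_succ_iff.1 m.isLt)).ne'

end Matrix

theorem add_one_le_of_sum_mul_eq_one_add_mul_pow {K : Type*} [Field K] [CharZero K] {r n : ℕ}
    {S : Set K} (hS : S.Infinite) (a b : Fin n → K → K)
    (h : ∀ z ∈ S, ∀ w ∈ S, ∑ i, a i z * b i w = (1 + z * w) ^ r) : r + 1 ≤ n := by
  let p : Fin (r + 1) → K := fun j => hS.natEmbedding _ j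
  have hp : Function.Injective p := fun j k hjk =>
    Fin.val_injective ((hS.natEmbedding _).injective (Subtype.val_injective hjk))
  have hprod : Matrix.of (fun j i => a i (p j)) * Matrix.of (fun i k => b i (p k)) =
      Matrix.of fun j k => (1 + p j * p k) ^ r := by
    ext j k
    exact h _ (hS.natEmbedding _ j).2 _ (hS.natEmbedding _ k).2
  have hdet := Matrix.det_of_one_add_mul_pow_ne_zero hp
  rw [← hprod] at hdet
  simpa using Matrix.card_le_card_of_det_mul_ne_zero _ _ hdet

theorem DifferentiableOn.conj_comp_conj_ball {f : ℂ → ℂ} {ε : ℝ}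
    (hf : DifferentiableOn ℂ f (ball 0 ε)) : DifferentiableOn ℂ (conj ∘ f ∘ conj) (ball 0 ε) :=
  fun z hz => (differentiableAt_conj_conj_iff.2 <| hf.differentiableAt <|
    isOpen_ball.mem_nhds (by simpa using hz)).differentiableWithinAt

theorem stmt_9_general (r : ℕ) (N : ℕ) (f : Fin (N + 1) → ℂ → ℂ) (U : Set ℂ)
    (hU : IsOpen U) (h0 : (0 : ℂ) ∈ U) (hf : ∀ i, DifferentiableOn ℂ (f i) U)
    (heq : ∀ z ∈ U, (1 + ‖z‖ ^ 2) ^ r = ∑ i, ‖f i z‖ ^ 2) :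
    N ≥ r := by
  obtain ⟨ε, hε, hball⟩ := isOpen_iff.1 hU 0 h0
  have hfε i : DifferentiableOn ℂ (f i) (ball 0 ε) := (hf i).mono hball
  let g i : ℂ → ℂ := conj ∘ f i ∘ conj
  have hdiag : ∀ z ∈ ball (0 : ℂ) ε, ∑ i, f i z * g i (conj z) = (1 + z * conj z) ^ r := by
    intro z hz
    simp only [g, Function.comp_apply, conj_conj, mul_conj']
    exact_mod_cast (heq z (hball hz)).symm
  have hdiff : DifferentiableOn ℂ (fun q : ℂ × ℂ => ∑ i, f i q.1 * g i q.2 - (1 + q.1 * q.2) ^ r)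
      (ball 0 ε ×ˢ ball 0 ε) :=
    .sub (.fun_sum fun i _ => ((hfε i).comp differentiableOn_fst fun _ hq => hq.1).mul
      ((hfε i).conj_comp_conj_ball.comp differentiableOn_snd fun _ hq => hq.2)) (by fun_prop)
  have hpolar := Complex.eq_zero_of_forall_apply_conj_eq_zero
    (F := fun z w => ∑ i, f i z * g i w - (1 + z * w) ^ r) hdiff
    fun z hz => sub_eq_zero.2 (hdiag z hz)
  have := add_one_le_of_sum_mul_eq_one_add_mul_pow
    (infinite_of_mem_nhds 0 (ball_mem_nhds 0 (half_pos hε))) f g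
    fun z hz w hw => sub_eq_zero.1 (hpolar z hz w hw)
  omega

/-- A representation `(1+|z|²)^r = Σ_{i=0}^N |f_i|²` forces `N ≥ r`. -/
theorem stmt_9 (r : ℕ) (hr : 0 < r) (N : ℕ) (f : Fin (N + 1) → ℂ → ℂ) (U : Set ℂ)
    (hU : IsOpen U) (h0 : (0 : ℂ) ∈ U) (hf : ∀ i, DifferentiableOn ℂ (f i) U)
    (heq : ∀ z ∈ U, (1 + ‖z‖ ^ 2) ^ r = ∑ i, ‖f i z‖ ^ 2) :
    N ≥ r :=
  stmt_9_general r N f U hU h0 hf heq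
end

section
/- Let U ⊆ ℂ be a connected open set and let f₁,…,f_n and g₁,…,g_n be holomorphic functions on U, each family linearly independent over ℂ, such that Σ_{i=1}^n |f_i(z)|² = Σ_{j=1}^n |g_j(z)|² for all z ∈ U. Then there exists a unitary n×n matrix A such that (g₁,…,g_n)ᵗ = A·(f₁,…,f_n)ᵗ as functions on U. -/
/-!
Polarization: `H(z, ζ) = ∑ᵢ fᵢ(z) conj (fᵢ (conj ζ)) - ∑ⱼ gⱼ(z) conj (gⱼ (conj ζ))` is holomorphic
in two variables and vanishes on the totally real set `{(z, conj z)}`, hence near it; so the two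
families have the same Gram kernel `K(z, w) = ∑ conj (fᵢ w) fᵢ z` near a point `z₀`. By linear
independence and the identity theorem, the vectors `f(z)` for `z` near `z₀` span `ℂⁿ`. Take `n` of
them forming the columns of an invertible `M`, with `N` the matrix of the corresponding `g(z)`:
equality of Gram matrices `Mᴴ M = Nᴴ N` makes `A = N M⁻¹` unitary, and equality of the kernels
gives `g = A f` near `z₀`, hence on all of `U`.
-/

open Complex Metric Matrix Filter Topology ComplexConjugate Set

theorem Submodule.span_eq_top_of_dotProduct_eq_zero {K n : Type*} [Field K] [Fintype n]
    [DecidableEq n] {S : Set (n → K)} (h : ∀ c : n → K, (∀ v ∈ S, c ⬝ᵥ v = 0) → c = 0) :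
    Submodule.span K S = ⊤ := by
  rw [← Submodule.dualAnnihilator_eq_bot_iff, Submodule.eq_bot_iff]
  intro φ hφ
  rw [Submodule.mem_dualAnnihilator] at hφ
  have hc := h ((dotProductEquiv K n).symm φ) fun v hv => by
    rw [← dotProductEquiv_apply_apply, LinearEquiv.apply_symm_apply]
    exact hφ v (Submodule.subset_span hv)
  simpa using congrArg (dotProductEquiv K n) hc

theorem exists_linearIndependent_comp_of_span_image_eq_top {K α n : Type*} [Field K] [Fintype n]
    {F : α → n → K} {s : Set α} (h : Submodule.span K (F '' s) = ⊤) :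
    ∃ w : n → α, (∀ k, w k ∈ s) ∧ LinearIndependent K (F ∘ w) := by
  obtain ⟨t, hts, htspan, hli⟩ := exists_linearIndependent K (F '' s)
  let b := Module.Basis.mk hli (by rw [Subtype.range_coe, htspan, h])
  let e := b.indexEquiv (Pi.basisFun K n)
  choose w hws hw using fun k => hts (e.symm k).2
  refine ⟨w, hws, ?_⟩
  rw [show F ∘ w = _ from funext hw]
  exact hli.comp e.symm e.symm.injective

theorem exists_mem_unitaryGroup_mulVec_eq_of_dotProduct_eq {𝕜 α n : Type*} [Field 𝕜]
    [StarRing 𝕜] [Fintype n] [DecidableEq n] {F G : α → n → 𝕜} {s : Set α}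
    (hspan : Submodule.span 𝕜 (F '' s) = ⊤)
    (hgram : ∀ z ∈ s, ∀ w ∈ s, star (F w) ⬝ᵥ F z = star (G w) ⬝ᵥ G z) :
    ∃ A ∈ unitaryGroup n 𝕜, ∀ z ∈ s, G z = A *ᵥ F z := by
  obtain ⟨w, hws, hli⟩ := exists_linearIndependent_comp_of_span_image_eq_top hspan
  set M : Matrix n n 𝕜 := of fun j k => F (w k) j
  set N : Matrix n n 𝕜 := of fun i k => G (w k) i
  have hM : IsUnit M.det := (isUnit_iff_isUnit_det M).1 (linearIndependent_cols_iff_isUnit.1 hli)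
  have hMH : IsUnit Mᴴ.det := by rw [det_conjTranspose]; exact hM.star
  have hMN : Mᴴ * M = Nᴴ * N := by
    ext k l
    exact hgram (w l) (hws l) (w k) (hws k)
  have hMNv : ∀ z ∈ s, Mᴴ *ᵥ F z = Nᴴ *ᵥ G z := fun z hz => by
    ext k
    exact hgram z hz (w k) (hws k)
  set A := N * M⁻¹
  have hA : A ∈ unitaryGroup n 𝕜 := by
    rw [mem_unitaryGroup_iff', star_eq_conjTranspose, conjTranspose_mul, conjTranspose_nonsing_inv,
      Matrix.mul_assoc, ← Matrix.mul_assoc Nᴴ, ← hMN, Matrix.mul_assoc, mul_nonsing_inv _ hM,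
      Matrix.mul_one, nonsing_inv_mul _ hMH]
  refine ⟨A, hA, fun z hz => ?_⟩
  have hAG : star A *ᵥ G z = F z := by
    rw [star_eq_conjTranspose, conjTranspose_mul, conjTranspose_nonsing_inv, ← mulVec_mulVec,
      ← hMNv z hz, mulVec_mulVec, nonsing_inv_mul _ hMH, one_mulVec]
  rw [← hAG, mulVec_mulVec, mem_unitaryGroup_iff.1 hA, one_mulVec]

theorem AnalyticOnNhd.eqOn_zero_of_eventually_real_eq_zero {φ : ℂ → ℂ} {U : Set ℂ}
    (hφ : AnalyticOnNhd ℂ φ U) (hU : IsPreconnected U) {x₀ : ℝ} (hx₀ : (x₀ : ℂ) ∈ U)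
    (h : ∀ᶠ x : ℝ in 𝓝 x₀, φ x = 0) : EqOn φ 0 U := by
  have hreal : Tendsto ((↑) : ℝ → ℂ) (𝓝[≠] x₀) (𝓝[≠] (x₀ : ℂ)) :=
    tendsto_nhdsWithin_of_tendsto_nhds_of_eventually_within _
      (continuous_ofReal.tendsto x₀ |>.mono_left nhdsWithin_le_nhds)
      (eventually_nhdsWithin_of_forall fun _ hx => ofReal_injective.ne hx)
  exact hφ.eqOn_zero_of_preconnected_of_frequently_eq_zero hU hx₀
    (hreal.frequently (h.filter_mono nhdsWithin_le_nhds).frequently)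

theorem eqOn_zero_of_forall_real_eq_zero {Φ : ℂ × ℂ → ℂ} {s : ℝ}
    (hΦ : DifferentiableOn ℂ Φ (ball 0 s ×ˢ ball 0 s))
    (h : ∀ x y : ℝ, |x| < s → |y| < s → Φ (x, y) = 0) :
    EqOn Φ 0 (ball 0 s ×ˢ ball 0 s) := by
  rintro ⟨u, v⟩ huv
  have hs : 0 < s := pos_of_mem_ball huv.1
  have hreal : ∀ᶠ x : ℝ in 𝓝 0, |x| < s :=
    (isOpen_lt continuous_abs continuous_const).mem_nhds (by simpa using hs)
  have h0 : ((0 : ℝ) : ℂ) ∈ ball (0 : ℂ) s := by simpa using hs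
  have hmaps : ∀ {a b : ℂ → ℂ}, Differentiable ℂ a → Differentiable ℂ b →
      MapsTo (fun t => (a t, b t)) (ball 0 s) (ball 0 s ×ˢ ball 0 s)
      → AnalyticOnNhd ℂ (fun t => Φ (a t, b t)) (ball 0 s) := fun ha hb hab =>
    (hΦ.comp (ha.prodMk hb).differentiableOn hab).analyticOnNhd isOpen_ball
  have hslice : ∀ y : ℝ, |y| < s → EqOn (fun u => Φ (u, y)) 0 (ball 0 s) := fun y hy =>
    (hmaps differentiable_id (differentiable_const _) fun u hu => by
      simpa [hu] using hy).eqOn_zero_of_eventually_real_eq_zero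
      (convex_ball 0 s).isPreconnected h0 (hreal.mono fun x hx => h x y hx hy)
  exact (hmaps (differentiable_const _) differentiable_id fun v hv => by
      simpa [hv] using huv.1).eqOn_zero_of_eventually_real_eq_zero
    (convex_ball 0 s).isPreconnected h0 (hreal.mono fun y hy => hslice y hy huv.1) huv.2

theorem eq_zero_of_eq_zero_on_conj_diagonal {H : ℂ × ℂ → ℂ} {z₀ : ℂ} {r : ℝ}
    (hH : DifferentiableOn ℂ H (ball z₀ r ×ˢ ball (conj z₀) r))
    (hdiag : ∀ z ∈ ball z₀ r, H (z, conj z) = 0) :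
    ∀ z ∈ ball z₀ (r / 2), ∀ w ∈ ball z₀ (r / 2), H (z, conj w) = 0 := by
  -- in the coordinates `(u, v)` the set `{(z, conj z)}` becomes `ℝ × ℝ`
  set L : ℂ × ℂ → ℂ × ℂ := fun p => (z₀ + p.1 + I * p.2, conj z₀ + p.1 - I * p.2)
  have hL : MapsTo L (ball 0 (r / 2) ×ˢ ball 0 (r / 2)) (ball z₀ r ×ˢ ball (conj z₀) r) := by
    rintro ⟨u, v⟩ ⟨hu, hv⟩
    rw [mem_ball_zero_iff] at hu hv
    have huv : ‖u‖ + ‖I * v‖ < r := by rw [norm_mul, norm_I, one_mul]; linarith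
    constructor
    · rw [mem_ball, dist_eq_norm, show z₀ + u + I * v - z₀ = u + I * v by ring]
      exact (norm_add_le _ _).trans_lt huv
    · rw [mem_ball, dist_eq_norm, show conj z₀ + u - I * v - conj z₀ = u - I * v by ring]
      exact (norm_sub_le _ _).trans_lt huv
  have hΦ : EqOn (H ∘ L) 0 (ball 0 (r / 2) ×ˢ ball 0 (r / 2)) := by
    refine eqOn_zero_of_forall_real_eq_zero (hH.comp (by fun_prop) hL) fun x y hx hy => ?_
    have hxy : ((x : ℂ), (y : ℂ)) ∈ ball 0 (r / 2) ×ˢ ball 0 (r / 2) := by simp [hx, hy]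
    have hconj : conj z₀ + x - I * y = conj (z₀ + x + I * y) := by simp; ring
    simpa [L, hconj] using hdiag _ (hL hxy).1
  intro z hz w hw
  rw [mem_ball_iff_norm] at hz hw
  set a := z - z₀
  set b := conj w - conj z₀
  have hb : ‖b‖ = ‖w - z₀‖ := by rw [← norm_conj, map_sub, conj_conj, conj_conj]
  have huv : ((a + b) / 2, I * (b - a) / 2) ∈ ball 0 (r / 2) ×ˢ ball 0 (r / 2) := by
    simp only [mem_prod, mem_ball_zero_iff, norm_div, norm_mul, norm_I, one_mul, Complex.norm_two]
    constructor
    · linarith [norm_add_le a b]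
    · linarith [norm_sub_le b a]
  have hLuv : L ((a + b) / 2, I * (b - a) / 2) = (z, conj w) := by
    simp only [L, Prod.mk.injEq]
    constructor
    · linear_combination (b - a) / 2 * I_sq
    · linear_combination -(b - a) / 2 * I_sq
  simpa [hLuv] using hΦ huv

theorem exists_ball_sum_conj_mul_eq {ι κ : Type*} [Fintype ι] [Fintype κ] {U : Set ℂ}
    (hU : IsOpen U) {f : ι → ℂ → ℂ} {g : κ → ℂ → ℂ}
    (hf : ∀ i, DifferentiableOn ℂ (f i) U) (hg : ∀ j, DifferentiableOn ℂ (g j) U)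
    (heq : ∀ z ∈ U, ∑ i, ‖f i z‖ ^ 2 = ∑ j, ‖g j z‖ ^ 2) {z₀ : ℂ} (hz₀ : z₀ ∈ U) :
    ∃ ρ > 0, ∀ z ∈ ball z₀ ρ, ∀ w ∈ ball z₀ ρ,
      ∑ i, conj (f i w) * f i z = ∑ j, conj (g j w) * g j z := by
  obtain ⟨r, hr, hball⟩ := Metric.isOpen_iff.mp hU z₀ hz₀
  have hsesq : ∀ {h : ℂ → ℂ}, DifferentiableOn ℂ h U →
      DifferentiableOn ℂ (fun p : ℂ × ℂ => conj (h (conj p.2)) * h p.1)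
        (ball z₀ r ×ˢ ball (conj z₀) r) := by
    rintro h hh ⟨z, w⟩ ⟨hz, hw⟩
    have hw' : conj w ∈ U := hball (by rwa [mem_ball, dist_conj_comm])
    have hconj := (hh.differentiableAt (hU.mem_nhds hw')).conj_conj
    rw [conj_conj] at hconj
    have hconj' : DifferentiableAt ℂ (fun p : ℂ × ℂ => conj (h (conj p.2))) (z, w) :=
      hconj.comp (f := Prod.snd) (z, w) differentiableAt_snd
    have hfst := (hh.differentiableAt (hU.mem_nhds (hball hz))).comp (z, w) differentiableAt_fst
    exact (hconj'.mul hfst).differentiableWithinAt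
  set H : ℂ × ℂ → ℂ := fun p =>
    ∑ i, conj (f i (conj p.2)) * f i p.1 - ∑ j, conj (g j (conj p.2)) * g j p.1
  have hH : DifferentiableOn ℂ H (ball z₀ r ×ˢ ball (conj z₀) r) :=
    (DifferentiableOn.fun_sum fun i _ => hsesq (hf i)).sub
      (DifferentiableOn.fun_sum fun j _ => hsesq (hg j))
  have hdiag : ∀ z ∈ ball z₀ r, H (z, conj z) = 0 := by
    intro z hz
    simp only [H, conj_conj, conj_mul', sub_eq_zero]
    exact_mod_cast heq z (hball hz)
  refine ⟨r / 2, by positivity, fun z hz w hw => ?_⟩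
  simpa [H, sub_eq_zero] using eq_zero_of_eq_zero_on_conj_diagonal hH hdiag z hz w hw

theorem span_values_eq_top_of_mem_nhds {n : Type*} [Fintype n] [DecidableEq n] {U s : Set ℂ}
    (hU : IsOpen U) (hUc : IsPreconnected U) {f : n → ℂ → ℂ}
    (hf : ∀ i, DifferentiableOn ℂ (f i) U)
    (hind : ∀ c : n → ℂ, (∀ z ∈ U, ∑ i, c i * f i z = 0) → c = 0)
    {z₀ : ℂ} (hz₀ : z₀ ∈ U) (hs : s ∈ 𝓝 z₀) :
    Submodule.span ℂ ((fun z i => f i z) '' s) = ⊤ := by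
  refine Submodule.span_eq_top_of_dotProduct_eq_zero fun c hc => hind c ?_
  have han : AnalyticOnNhd ℂ (fun z => ∑ i, c i * f i z) U :=
    (DifferentiableOn.fun_sum fun i _ => (hf i).const_mul (c i)).analyticOnNhd hU
  exact han.eqOn_zero_of_preconnected_of_eventuallyEq_zero hUc hz₀
    (mem_of_superset hs fun z hz => hc _ ⟨z, hz, rfl⟩)

theorem stmt_10_general (U : Set ℂ) (hU : IsOpen U) (hUconn : IsConnected U)
    (n : ℕ) (f g : Fin n → ℂ → ℂ)
    (hf : ∀ i, DifferentiableOn ℂ (f i) U) (hg : ∀ j, DifferentiableOn ℂ (g j) U)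
    (hfind : ∀ c : Fin n → ℂ, (∀ z ∈ U, ∑ i, c i * f i z = 0) → c = 0)
    (heq : ∀ z ∈ U, ∑ i, ‖f i z‖ ^ 2 = ∑ j, ‖g j z‖ ^ 2) :
    ∃ A : Matrix (Fin n) (Fin n) ℂ, A ∈ Matrix.unitaryGroup (Fin n) ℂ ∧
      ∀ z ∈ U, ∀ i, g i z = ∑ j, A i j * f j z := by
  obtain ⟨z₀, hz₀⟩ := hUconn.nonempty
  obtain ⟨ρ, hρ, hpolar⟩ := exists_ball_sum_conj_mul_eq hU hf hg heq hz₀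
  have hspan := span_values_eq_top_of_mem_nhds hU hUconn.isPreconnected hf hfind hz₀
    (ball_mem_nhds z₀ hρ)
  obtain ⟨A, hA, hAfg⟩ := exists_mem_unitaryGroup_mulVec_eq_of_dotProduct_eq
    (G := fun z j => g j z) hspan hpolar
  refine ⟨A, hA, fun z hz i => ?_⟩
  have hAf : AnalyticOnNhd ℂ (fun z => ∑ j, A i j * f j z) U :=
    (DifferentiableOn.fun_sum fun j _ => (hf j).const_mul (A i j)).analyticOnNhd hU
  refine ((hg i).analyticOnNhd hU).eqOn_of_preconnected_of_eventuallyEq hAf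
    hUconn.isPreconnected hz₀ ?_ hz
  filter_upwards [ball_mem_nhds z₀ hρ] with z hz using congrFun (hAfg z hz) i

/-- Calabi rigidity: two linearly independent holomorphic families with the same
squared norm differ by a constant unitary matrix. -/
theorem stmt_10 (U : Set ℂ) (hU : IsOpen U) (hUconn : IsConnected U)
    (n : ℕ) (f g : Fin n → ℂ → ℂ)
    (hf : ∀ i, DifferentiableOn ℂ (f i) U) (hg : ∀ j, DifferentiableOn ℂ (g j) U)
    (hfind : ∀ c : Fin n → ℂ, (∀ z ∈ U, ∑ i, c i * f i z = 0) → c = 0)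
    (hgind : ∀ c : Fin n → ℂ, (∀ z ∈ U, ∑ j, c j * g j z = 0) → c = 0)
    (heq : ∀ z ∈ U, ∑ i, ‖f i z‖ ^ 2 = ∑ j, ‖g j z‖ ^ 2) :
    ∃ A : Matrix (Fin n) (Fin n) ℂ, A ∈ Matrix.unitaryGroup (Fin n) ℂ ∧
      ∀ z ∈ U, ∀ i, g i z = ∑ j, A i j * f j z :=
  stmt_10_general U hU hUconn n f g hf hg hfind heq
end

section
/- There do not exist holomorphic functions k₁, k₂ on a nonempty connected open subset U of ℂ such that (1 + |k₁(z)|² + |k₂(z)|²)² = (1 + |z|²)³ for all z ∈ U. -/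
/-!
With `g = (1, k₁, k₂)` the hypothesis reads `∑ᵢⱼ |gᵢ gⱼ|² = ∑ᵣ C(3,r) |zʳ|²` on `U`, an identity
between sums `∑ fᵢ gᵢ‾` of holomorphic functions. Such an identity survives `∂ᵐ ∂̄ⁿ`
(Calabi's polarization). With `m = n = 4` the right-hand side dies, so `(gᵢ gⱼ)⁗ = 0` for all
`i, j`; since `k⁗ = (k²)⁗ = 0` forces `k'' = 0`, all `(gᵢ gⱼ)‴` vanish too, and `m = n = 3`
then reads `0 = |3!|²`.
-/

open Complex ComplexConjugate Set Topology

theorem AnalyticOnNhd.iteratedDeriv {𝕜 F : Type*} [NontriviallyNormedField 𝕜]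
    [NormedAddCommGroup F] [NormedSpace 𝕜 F] [CompleteSpace F] {s : Set 𝕜} {f : 𝕜 → F}
    (hf : AnalyticOnNhd 𝕜 f s) (n : ℕ) : AnalyticOnNhd 𝕜 (_root_.iteratedDeriv n f) s := by
  simpa only [iteratedDeriv_eq_iterate] using hf.iterated_deriv n

section Polarization

variable {ι κ : Type*} [Fintype ι] [Fintype κ] {U : Set ℂ}

theorem hasDerivAt_sum_mul_conj_comp_line {f g : ι → ℂ → ℂ} {f' g' : ι → ℂ} {z : ℂ}
    (hf : ∀ i, HasDerivAt (f i) (f' i) z) (hg : ∀ i, HasDerivAt (g i) (g' i) z) (w : ℂ) :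
    HasDerivAt (fun t : ℝ => ∑ i, f i (z + t * w) * conj (g i (z + t * w)))
      ((∑ i, f' i * conj (g i z)) * w + (∑ i, f i z * conj (g' i)) * conj w) 0 := by
  have hline : HasDerivAt (fun t : ℝ => z + t * w) w 0 := by
    simpa using ((hasDerivAt_id (0 : ℝ)).ofReal_comp.mul_const w).const_add z
  have hz : z + ((0 : ℝ) : ℂ) * w = z := by simp
  have hterm : ∀ i, HasDerivAt (fun t : ℝ => f i (z + t * w) * conj (g i (z + t * w)))
      (f' i * w * conj (g i z) + f i z * conj (g' i * w)) 0 := fun i =>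
    (((hz ▸ hf i).comp (0 : ℝ) hline).mul ((hz ▸ hg i).comp (0 : ℝ) hline).star).congr_deriv
      (by simp)
  refine (HasDerivAt.fun_sum (u := Finset.univ) fun i _ => hterm i).congr_deriv ?_
  simp only [Finset.sum_mul, ← Finset.sum_add_distrib, map_mul]
  exact Finset.sum_congr rfl fun i _ => by ring

theorem eq_of_forall_mul_add_mul_conj_eq {a b c d : ℂ}
    (h : ∀ w : ℂ, a * w + b * conj w = c * w + d * conj w) : a = c := by
  have h1 := h 1
  have hI := h I
  simp only [map_one, mul_one, conj_I] at h1 hI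
  have : 2 * I * (a - c) = 0 := by linear_combination I * h1 + hI
  simpa [I_ne_zero, sub_eq_zero] using this

/-- Along each real line `t ↦ z + t w` both sides have derivative `X w + Y w‾`, where `X` is the
`∂`-derivative; taking `w = 1` and `w = I` separates `X` from `Y`. -/
theorem eqOn_sum_deriv_mul_conj (hU : IsOpen U) {f g : ι → ℂ → ℂ} {u v : κ → ℂ → ℂ}
    (hf : ∀ i, DifferentiableOn ℂ (f i) U) (hg : ∀ i, DifferentiableOn ℂ (g i) U)
    (hu : ∀ j, DifferentiableOn ℂ (u j) U) (hv : ∀ j, DifferentiableOn ℂ (v j) U)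
    (h : EqOn (fun z => ∑ i, f i z * conj (g i z)) (fun z => ∑ j, u j z * conj (v j z)) U) :
    EqOn (fun z => ∑ i, deriv (f i) z * conj (g i z))
      (fun z => ∑ j, deriv (u j) z * conj (v j z)) U := by
  intro z hz
  have hd : ∀ {φ : ℂ → ℂ}, DifferentiableOn ℂ φ U → HasDerivAt φ (deriv φ z) z :=
    fun hφ => (hφ.differentiableAt (hU.mem_nhds hz)).hasDerivAt
  refine eq_of_forall_mul_add_mul_conj_eq (b := ∑ i, f i z * conj (deriv (g i) z))
    (d := ∑ j, u j z * conj (deriv (v j) z)) fun w => ?_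
  have hnear : ∀ᶠ t : ℝ in 𝓝 0, z + t * w ∈ U :=
    (continuous_const.add (continuous_ofReal.mul continuous_const)).continuousAt.eventually_mem
      (by simpa using hU.mem_nhds hz)
  exact (hasDerivAt_sum_mul_conj_comp_line (fun i => hd (hf i)) (fun i => hd (hg i)) w).unique <|
    (hasDerivAt_sum_mul_conj_comp_line (fun j => hd (hu j)) (fun j => hd (hv j)) w)
      |>.congr_of_eventuallyEq (hnear.mono fun t ht => h ht)

theorem eqOn_sum_mul_conj_symm {f g : ι → ℂ → ℂ} {u v : κ → ℂ → ℂ}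
    (h : EqOn (fun z => ∑ i, f i z * conj (g i z)) (fun z => ∑ j, u j z * conj (v j z)) U) :
    EqOn (fun z => ∑ i, g i z * conj (f i z)) (fun z => ∑ j, v j z * conj (u j z)) U := by
  intro z hz
  simpa [map_sum, mul_comm] using congrArg conj (h hz)

theorem eqOn_sum_iteratedDeriv_mul_conj_left (hU : IsOpen U) {f g : ι → ℂ → ℂ}
    {u v : κ → ℂ → ℂ} (hf : ∀ i, AnalyticOnNhd ℂ (f i) U) (hg : ∀ i, AnalyticOnNhd ℂ (g i) U)
    (hu : ∀ j, AnalyticOnNhd ℂ (u j) U) (hv : ∀ j, AnalyticOnNhd ℂ (v j) U)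
    (h : EqOn (fun z => ∑ i, f i z * conj (g i z)) (fun z => ∑ j, u j z * conj (v j z)) U)
    (m : ℕ) :
    EqOn (fun z => ∑ i, iteratedDeriv m (f i) z * conj (g i z))
      (fun z => ∑ j, iteratedDeriv m (u j) z * conj (v j z)) U := by
  induction m with
  | zero => simpa only [iteratedDeriv_zero] using h
  | succ m ih =>
    simp only [iteratedDeriv_succ]
    exact eqOn_sum_deriv_mul_conj hU (fun i => ((hf i).iteratedDeriv m).differentiableOn)
      (fun i => (hg i).differentiableOn) (fun j => ((hu j).iteratedDeriv m).differentiableOn)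
      (fun j => (hv j).differentiableOn) ih

theorem eqOn_sum_iteratedDeriv_mul_conj (hU : IsOpen U) {f g : ι → ℂ → ℂ}
    {u v : κ → ℂ → ℂ} (hf : ∀ i, AnalyticOnNhd ℂ (f i) U) (hg : ∀ i, AnalyticOnNhd ℂ (g i) U)
    (hu : ∀ j, AnalyticOnNhd ℂ (u j) U) (hv : ∀ j, AnalyticOnNhd ℂ (v j) U)
    (h : EqOn (fun z => ∑ i, f i z * conj (g i z)) (fun z => ∑ j, u j z * conj (v j z)) U)
    (m n : ℕ) :
    EqOn (fun z => ∑ i, iteratedDeriv m (f i) z * conj (iteratedDeriv n (g i) z))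
      (fun z => ∑ j, iteratedDeriv m (u j) z * conj (iteratedDeriv n (v j) z)) U :=
  eqOn_sum_mul_conj_symm <| eqOn_sum_iteratedDeriv_mul_conj_left hU hg
    (fun i => (hf i).iteratedDeriv m) hv (fun j => (hu j).iteratedDeriv m)
    (eqOn_sum_mul_conj_symm (eqOn_sum_iteratedDeriv_mul_conj_left hU hf hg hu hv h m)) n

theorem eq_zero_of_sum_mul_conj_self_eq_zero {a : ι → ℂ} (h : ∑ i, a i * conj (a i) = 0)
    (i : ι) : a i = 0 := by
  simp only [mul_conj, ← ofReal_sum, ofReal_eq_zero] at h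
  exact normSq_eq_zero.mp <|
    (Finset.sum_eq_zero_iff_of_nonneg fun i _ => normSq_nonneg (a i)).mp h i (Finset.mem_univ i)

end Polarization

section Derivatives

variable {𝕜 : Type*} [RCLike 𝕜] {U : Set 𝕜} {f g : 𝕜 → 𝕜}

theorem AnalyticOnNhd.hasDerivAt_iteratedDeriv (hf : AnalyticOnNhd 𝕜 f U) (n : ℕ) {z : 𝕜}
    (hz : z ∈ U) :
    HasDerivAt (_root_.iteratedDeriv n f) (_root_.iteratedDeriv (n + 1) f z) z := by
  rw [iteratedDeriv_succ]
  exact ((hf.iteratedDeriv n) z hz).differentiableAt.hasDerivAt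

theorem HasDerivAt.eq_zero_of_eqOn_zero (hU : IsOpen U) (hf : EqOn f 0 U) {f' z : 𝕜}
    (hz : z ∈ U) (h : HasDerivAt f f' z) : f' = 0 :=
  h.unique <| (hasDerivAt_const z 0).congr_of_eventuallyEq <|
    Filter.eventually_of_mem (hU.mem_nhds hz) hf

/-- Once `f⁗ = 0`, Leibniz gives `(f²)⁗ = 8 f' f‴ + 6 f''²`; differentiating this twice more
forces `f‴ = 0`, and then `f'' = 0`. -/
theorem iteratedDeriv_two_eqOn_zero_of_iteratedDeriv_four (hU : IsOpen U)
    (hf : AnalyticOnNhd 𝕜 f U) (h4 : EqOn (iteratedDeriv 4 f) 0 U)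
    (hsq : EqOn (iteratedDeriv 4 (f * f)) 0 U) : EqOn (iteratedDeriv 2 f) 0 U := by
  set a : ℕ → 𝕜 → 𝕜 := fun n => iteratedDeriv n f with ha
  have hd : ∀ n, ∀ z ∈ U, HasDerivAt (a n) (a (n + 1) z) z :=
    fun n z hz => hf.hasDerivAt_iteratedDeriv n hz
  have h4' : ∀ z ∈ U, a 4 z = 0 := fun z hz => h4 hz
  have e1 : EqOn (fun z => 8 * (a 1 z * a 3 z) + 6 * (a 2 z * a 2 z)) 0 U := by
    intro z hz
    have h := hsq hz
    rw [iteratedDeriv_mul (hf z hz).contDiffAt (hf z hz).contDiffAt] at h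
    simp only [Finset.sum_range_succ, Finset.sum_range_zero, iteratedDeriv_zero] at h
    have h4z := h4' z hz
    simp only [ha] at h4z ⊢
    norm_num [Nat.choose, h4z] at h ⊢
    linear_combination h
  have e2 : EqOn (fun z => a 2 z * a 3 z) 0 U := by
    intro z hz
    have h := HasDerivAt.eq_zero_of_eqOn_zero hU e1 hz
      ((((hd 1 z hz).mul (hd 3 z hz)).const_mul 8).add
        (((hd 2 z hz).mul (hd 2 z hz)).const_mul 6))
    rw [h4' z hz] at h
    simp only [Pi.zero_apply]
    linear_combination h / 20
  have e3 : EqOn (a 3) 0 U := by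
    intro z hz
    have h := HasDerivAt.eq_zero_of_eqOn_zero hU e2 hz ((hd 2 z hz).mul (hd 3 z hz))
    rw [h4' z hz, mul_zero, add_zero] at h
    exact mul_self_eq_zero.mp h
  intro z hz
  have h := e1 hz
  simp only [e3 hz, Pi.zero_apply, mul_zero, zero_add] at h ⊢
  exact mul_self_eq_zero.mp (by linear_combination h / 6)

theorem iteratedDeriv_three_mul_eq_zero (hU : IsOpen U) (hf : AnalyticOnNhd 𝕜 f U)
    (hg : AnalyticOnNhd 𝕜 g U) (hf2 : EqOn (iteratedDeriv 2 f) 0 U)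
    (hg2 : EqOn (iteratedDeriv 2 g) 0 U) {z : 𝕜} (hz : z ∈ U) :
    iteratedDeriv 3 (f * g) z = 0 := by
  have hf3 := (hf.hasDerivAt_iteratedDeriv 2 hz).eq_zero_of_eqOn_zero hU hf2 hz
  have hg3 := (hg.hasDerivAt_iteratedDeriv 2 hz).eq_zero_of_eqOn_zero hU hg2 hz
  rw [iteratedDeriv_mul (hf z hz).contDiffAt (hg z hz).contDiffAt]
  simp [Finset.sum_range_succ, hf2 hz, hg2 hz, hf3, hg3]

end Derivatives

theorem sum_mul_mul_conj_mul {ι : Type*} [Fintype ι] (w : ι → ℂ) :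
    ∑ q : ι × ι, w q.1 * w q.2 * conj (w q.1 * w q.2) = (∑ i, w i * conj (w i)) ^ 2 := by
  rw [sq, Finset.sum_mul_sum, ← Finset.univ_product_univ, Finset.sum_product]
  exact Finset.sum_congr rfl fun i _ => Finset.sum_congr rfl fun j _ => by rw [map_mul]; ring

theorem one_add_mul_conj_pow_three (z : ℂ) :
    (1 + z * conj z) ^ 3 =
      ∑ r : Fin 4, (Nat.choose 3 r : ℂ) * z ^ (r : ℕ) * conj (z ^ (r : ℕ)) := by
  simp [Fin.sum_univ_four, Nat.choose]
  ring

theorem sum_mul_mul_conj_mul_eq_of_norm_eq {a b z : ℂ}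
    (h : (1 + ‖a‖ ^ 2 + ‖b‖ ^ 2) ^ 2 = (1 + ‖z‖ ^ 2) ^ 3) :
    ∑ q : Fin 3 × Fin 3, ![1, a, b] q.1 * ![1, a, b] q.2 * conj (![1, a, b] q.1 * ![1, a, b] q.2)
      = ∑ r : Fin 4, (Nat.choose 3 r : ℂ) * z ^ (r : ℕ) * conj (z ^ (r : ℕ)) := by
  rw [sum_mul_mul_conj_mul, ← one_add_mul_conj_pow_three]
  simp only [Fin.sum_univ_three, mul_conj', Matrix.cons_val_zero, Matrix.cons_val_one,
    Matrix.cons_val_two, Matrix.head_cons, Matrix.tail_cons, norm_one, ofReal_one, one_pow]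
  exact_mod_cast h

/-- There is no local holomorphic isometry realizing `(1+|k₁|²+|k₂|²)² = (1+|z|²)³`. -/
theorem stmt_12 : ¬ ∃ (U : Set ℂ) (k₁ k₂ : ℂ → ℂ),
    IsOpen U ∧ U.Nonempty ∧ IsConnected U ∧
    DifferentiableOn ℂ k₁ U ∧ DifferentiableOn ℂ k₂ U ∧
    ∀ z ∈ U, (1 + ‖k₁ z‖ ^ 2 + ‖k₂ z‖ ^ 2) ^ 2
      = (1 + ‖z‖ ^ 2) ^ 3 := by
  rintro ⟨U, k₁, k₂, hU, ⟨p, hp⟩, -, hk₁, hk₂, hnorm⟩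
  set g : Fin 3 → ℂ → ℂ := fun i z => ![1, k₁ z, k₂ z] i
  have hg : ∀ i, AnalyticOnNhd ℂ (g i) U := by
    intro i
    fin_cases i
    exacts [analyticOnNhd_const, hk₁.analyticOnNhd hU, hk₂.analyticOnNhd hU]
  have hpolar := eqOn_sum_iteratedDeriv_mul_conj (f := fun q : Fin 3 × Fin 3 => g q.1 * g q.2)
    (u := fun (r : Fin 4) z => (Nat.choose 3 r : ℂ) * z ^ (r : ℕ)) (v := fun r z => z ^ (r : ℕ))
    hU (fun q => (hg q.1).mul (hg q.2)) (fun q => (hg q.1).mul (hg q.2))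
    (fun _ => analyticOnNhd_const.mul (analyticOnNhd_id.pow _)) (fun _ => analyticOnNhd_id.pow _)
    fun z hz => sum_mul_mul_conj_mul_eq_of_norm_eq (hnorm z hz)
  have hprod4 : ∀ q : Fin 3 × Fin 3, EqOn (iteratedDeriv 4 (g q.1 * g q.2)) 0 U := fun q z hz =>
    eq_zero_of_sum_mul_conj_self_eq_zero
      (a := fun q : Fin 3 × Fin 3 => iteratedDeriv 4 (g q.1 * g q.2) z)
      ((hpolar 4 4 hz).trans (by simp [Fin.sum_univ_four, Nat.descFactorial])) q
  have hone : ∀ i, g 0 * g i = g i := fun i => funext fun z => one_mul (g i z)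
  have haffine : ∀ i, EqOn (iteratedDeriv 2 (g i)) 0 U := fun i =>
    iteratedDeriv_two_eqOn_zero_of_iteratedDeriv_four hU (hg i) (hone i ▸ hprod4 (0, i))
      (hprod4 (i, i))
  have hprod3 : ∀ q : Fin 3 × Fin 3, iteratedDeriv 3 (g q.1 * g q.2) p = 0 := fun q =>
    iteratedDeriv_three_mul_eq_zero hU (hg q.1) (hg q.2) (haffine q.1) (haffine q.2) hp
  have h := hpolar 3 3 hp
  simp [hprod3, Fin.sum_univ_four, Nat.descFactorial] at h
end

section
/- Let U ⊆ ℂ be a connected open set containing 0 and let f, g be holomorphic functions on U with f(0) = g(0) = 0 satisfying (1 + |f(z)|²)·(1 − |g(z)|²) = 1 for all z ∈ U. Then f and g are both identically zero on U. -/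
/-! The function `H z w = (1 + f z * conj (f w)) * (1 - g z * conj (g w)) - 1` is holomorphic in
`z`, antiholomorphic in `w` and vanishes on the diagonal, so it vanishes identically near `0`:
along `w = conj (μ z)` with `‖μ‖ = 1` it is holomorphic in `z` and vanishes on the line fixed by
`z ↦ conj (μ z)`, so `H z w = 0` whenever `‖z‖ = ‖w‖`; then for fixed `w` it is holomorphic in `z`
and vanishes on a circle.
If `f` were not identically zero near `0`, pick `w` with `f w ≠ 0`. For `z` near `0` with
`f z ≠ 0`, dividing `H z w = 0` by `H z z = 0` and letting `z → 0` gives `‖f w‖ = ‖g w‖`, and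
`(1 + ‖f w‖²) (1 - ‖f w‖²) = 1` forces `f w = 0`. -/

open Complex ComplexConjugate Filter Metric Set Topology

theorem AnalyticOnNhd.eqOn_zero_of_eventually_comp_eq_zero {ψ : ℂ → ℂ} {V : Set ℂ}
    (hψ : AnalyticOnNhd ℂ ψ V) (hV : IsPreconnected V) {γ : ℝ → ℂ} {γ' : ℂ} {t₀ : ℝ}
    (hγ : HasDerivAt γ γ' t₀) (hγ' : γ' ≠ 0) (hγV : γ t₀ ∈ V)
    (hψγ : ∀ᶠ t in 𝓝 t₀, ψ (γ t) = 0) : EqOn ψ 0 V :=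
  hψ.eqOn_zero_of_preconnected_of_frequently_eq_zero hV hγV
    ((hγ.tendsto_nhdsNE hγ').frequently (hψγ.filter_mono nhdsWithin_le_nhds).frequently)

section Polarization

variable {ι : Type*} [Fintype ι] {r : ℝ} {a b : ι → ℂ → ℂ}

theorem sum_mul_conj_comp_conj_mul_eq_zero (ha : ∀ i, DifferentiableOn ℂ (a i) (ball 0 r))
    (hb : ∀ i, DifferentiableOn ℂ (b i) (ball 0 r))
    (hdiag : ∀ z ∈ ball (0 : ℂ) r, ∑ i, b i z * conj (a i z) = 0)
    {μ : ℂ} (hμ : ‖μ‖ = 1) {z : ℂ} (hz : z ∈ ball 0 r) :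
    ∑ i, b i z * conj (a i (conj (μ * z))) = 0 := by
  have hr : 0 < r := (norm_nonneg z).trans_lt (mem_ball_zero_iff.1 hz)
  have hball : ∀ ζ ∈ ball (0 : ℂ) r, conj (μ * ζ) ∈ ball 0 r := by
    intro ζ hζ
    simpa [hμ] using hζ
  have hk : AnalyticOnNhd ℂ (fun ζ ↦ ∑ i, b i ζ * conj (a i (conj (μ * ζ)))) (ball 0 r) := by
    refine DifferentiableOn.analyticOnNhd (fun ζ hζ ↦ ?_) isOpen_ball
    refine (DifferentiableAt.fun_sum fun i _ ↦ ?_).differentiableWithinAt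
    have hai : DifferentiableAt ℂ (a i) (conj (μ * ζ)) :=
      (ha i).differentiableAt (isOpen_ball.mem_nhds (hball ζ hζ))
    exact ((hb i).differentiableAt (isOpen_ball.mem_nhds hζ)).mul
      ((differentiableAt_conj_conj_iff.2 hai).comp ζ (differentiableAt_id.const_mul μ))
  -- `ζ ↦ conj (μ ζ)` fixes the line `ℝ τ` when `τ ^ 2 = conj μ`, and there `hdiag` applies
  obtain ⟨τ, hτ⟩ := IsAlgClosed.exists_pow_nat_eq (conj μ) two_pos
  have hτ1 : ‖τ‖ = 1 := by
    have := congrArg norm hτ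
    rw [norm_pow, norm_conj, hμ] at this
    exact (pow_eq_one_iff_of_nonneg (norm_nonneg τ) two_ne_zero).1 this
  have hτ0 : τ ≠ 0 := by rintro rfl; simp at hτ1
  have hfix : ∀ t : ℝ, conj (μ * (t * τ)) = t * τ := by
    intro t
    have : conj τ * τ = 1 := by rw [mul_comm, mul_conj', hτ1]; simp
    rw [map_mul, map_mul, conj_ofReal, ← hτ]
    linear_combination (↑t * τ) * this
  have hline : HasDerivAt (fun t : ℝ ↦ (t : ℂ) * τ) τ 0 := by
    simpa using (hasDerivAt_id (0 : ℝ)).ofReal_comp.mul_const τ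
  have hline0 : ((0 : ℝ) : ℂ) * τ ∈ ball 0 r := by simpa using hr
  refine hk.eqOn_zero_of_eventually_comp_eq_zero (convex_ball 0 r).isPreconnected hline hτ0
    hline0 ?_ hz
  filter_upwards [hline.continuousAt.preimage_mem_nhds (isOpen_ball.mem_nhds hline0)] with t ht
  simp only [hfix t]
  exact hdiag _ ht

theorem sum_mul_conj_eq_zero_of_norm_eq (ha : ∀ i, DifferentiableOn ℂ (a i) (ball 0 r))
    (hb : ∀ i, DifferentiableOn ℂ (b i) (ball 0 r))
    (hdiag : ∀ z ∈ ball (0 : ℂ) r, ∑ i, b i z * conj (a i z) = 0)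
    {z w : ℂ} (hz : z ∈ ball 0 r) (hzw : ‖w‖ = ‖z‖) :
    ∑ i, b i z * conj (a i w) = 0 := by
  rcases eq_or_ne z 0 with rfl | hz0
  · rw [norm_zero, norm_eq_zero] at hzw
    exact hzw ▸ hdiag 0 hz
  have hμz : conj (conj w / z * z) = w := by simp [div_mul_cancel₀ _ hz0]
  have hμ : ‖conj w / z‖ = 1 := by simp [hzw, hz0]
  simpa [hμz] using sum_mul_conj_comp_conj_mul_eq_zero ha hb hdiag hμ hz

theorem sum_mul_conj_eq_zero (ha : ∀ i, DifferentiableOn ℂ (a i) (ball 0 r))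
    (hb : ∀ i, DifferentiableOn ℂ (b i) (ball 0 r))
    (hdiag : ∀ z ∈ ball (0 : ℂ) r, ∑ i, b i z * conj (a i z) = 0)
    {z w : ℂ} (hz : z ∈ ball 0 r) (hw : w ∈ ball 0 r) :
    ∑ i, b i z * conj (a i w) = 0 := by
  have hne : ∀ w ∈ ball (0 : ℂ) r, w ≠ 0 → ∑ i, b i z * conj (a i w) = 0 := by
    intro w hw hw0
    have hψ : AnalyticOnNhd ℂ (fun ζ ↦ ∑ i, b i ζ * conj (a i w)) (ball 0 r) :=
      (DifferentiableOn.fun_sum fun i _ ↦ (hb i).mul_const _).analyticOnNhd isOpen_ball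
    have hcircle : HasDerivAt (fun t : ℝ ↦ w * exp (t * I)) (w * I) 0 := by
      simpa using (((hasDerivAt_id (0 : ℝ)).ofReal_comp.mul_const I).cexp).const_mul w
    refine hψ.eqOn_zero_of_eventually_comp_eq_zero (convex_ball 0 r).isPreconnected hcircle
      (mul_ne_zero hw0 I_ne_zero) (by simpa using hw) (.of_forall fun t ↦ ?_) hz
    exact sum_mul_conj_eq_zero_of_norm_eq ha hb hdiag (by simpa using hw) (by simp)
  rcases eq_or_ne w 0 with rfl | hw0
  · have hF : ContinuousAt (fun w ↦ ∑ i, b i z * conj (a i w)) 0 := by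
      have := fun i ↦ ((ha i).differentiableAt (isOpen_ball.mem_nhds hw)).continuousAt
      fun_prop
    refine tendsto_nhds_unique (hF.tendsto.mono_left (nhdsWithin_le_nhds (s := {0}ᶜ)))
      (tendsto_const_nhds.congr' ?_)
    filter_upwards [self_mem_nhdsWithin, mem_nhdsWithin_of_mem_nhds (isOpen_ball.mem_nhds hw)]
      with w hw0 hw
    exact (hne w hw hw0).symm
  · exact hne w hw hw0

end Polarization

theorem one_add_mul_conj_mul_one_sub_mul_conj_eq_one {f g : ℂ → ℂ} {r : ℝ}
    (hf : DifferentiableOn ℂ f (ball 0 r)) (hg : DifferentiableOn ℂ g (ball 0 r))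
    (hfg : ∀ z ∈ ball (0 : ℂ) r, (1 + ‖f z‖ ^ 2) * (1 - ‖g z‖ ^ 2) = 1)
    {z w : ℂ} (hz : z ∈ ball 0 r) (hw : w ∈ ball 0 r) :
    (1 + f z * conj (f w)) * (1 - g z * conj (g w)) = 1 := by
  have hdiag : ∀ z ∈ ball (0 : ℂ) r,
      ∑ i, ![f, -g, -(f * g)] i z * conj (![f, g, f * g] i z) = 0 := by
    intro z hz
    have h := congrArg ((↑) : ℝ → ℂ) (hfg z hz)
    push_cast at h
    simp [Fin.sum_univ_three]
    linear_combination h + (1 - g z * conj (g z)) * mul_conj' (f z)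
      - (1 + (‖f z‖ : ℂ) ^ 2) * mul_conj' (g z)
  have := sum_mul_conj_eq_zero (fun i ↦ by fin_cases i <;> simp [hf, hg, hf.mul hg])
    (fun i ↦ by fin_cases i <;> simp [hf, hg.neg, (hf.mul hg).neg]) hdiag hz hw
  simp [Fin.sum_univ_three] at this
  linear_combination this

theorem eventuallyEq_zero_of_one_add_mul_conj_mul_one_sub_mul_conj_eq_one {f g : ℂ → ℂ}
    (hf : AnalyticAt ℂ f 0) (hg : ContinuousAt g 0) (hg0 : g 0 = 0) {s : Set ℂ} (hs : s ∈ 𝓝 0)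
    (hfg : ∀ z ∈ s, ∀ w ∈ s, (1 + f z * conj (f w)) * (1 - g z * conj (g w)) = 1) :
    f =ᶠ[𝓝 0] 0 := by
  refine hf.eventually_eq_zero_or_eventually_ne_zero.resolve_right fun hne ↦ ?_
  obtain ⟨w, hfw, hws⟩ := (hne.and (mem_nhdsWithin_of_mem_nhds hs)).exists
  have hnorm : ∀ z ∈ s, (1 + ‖f z‖ ^ 2) * (1 - ‖g z‖ ^ 2) = 1 := by
    intro z hz
    have := hfg z hz z hz
    rw [mul_conj', mul_conj'] at this
    exact_mod_cast this
  -- `H z w = 0` and `H z z = 0` give `‖f z‖ ^ 2 * D z = 0`, and `D 0 = ‖f w‖ ^ 2 - ‖g w‖ ^ 2`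
  set D := fun z ↦ ‖f w‖ ^ 2 * ‖1 - g z * conj (g w)‖ ^ 2 - ‖g w‖ ^ 2 * (1 - ‖g z‖ ^ 2)
  have hD : ∀ᶠ z in 𝓝[≠] 0, D z = 0 := by
    filter_upwards [hne, mem_nhdsWithin_of_mem_nhds hs] with z hfz hz
    have h1 : f z * conj (f w) * (1 - g z * conj (g w)) = g z * conj (g w) := by
      linear_combination hfg z hz w hws
    have h2 := congrArg (‖·‖ ^ 2) h1
    simp only [norm_mul, mul_pow, norm_conj] at h2
    have hfz2 : ‖f z‖ ^ 2 ≠ 0 := by positivity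
    refine mul_left_cancel₀ hfz2 ?_
    linear_combination h2 - ‖g w‖ ^ 2 * hnorm z hz
  have hlim : Tendsto D (𝓝[≠] 0) (𝓝 (‖f w‖ ^ 2 - ‖g w‖ ^ 2)) := by
    have : ContinuousAt D 0 := by fun_prop
    simpa [D, hg0] using this.tendsto.mono_left nhdsWithin_le_nhds
  have hfgw : ‖f w‖ ^ 2 = ‖g w‖ ^ 2 :=
    sub_eq_zero.1 (tendsto_nhds_unique hlim (tendsto_const_nhds.congr' (hD.mono fun _ h ↦ h.symm)))
  have := hnorm w hws
  rw [← hfgw] at this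
  have : (‖f w‖ ^ 2) ^ 2 = 0 := by linear_combination -this
  exact hfw (by simpa using this)

theorem stmt_14_general (U : Set ℂ) (hU : IsOpen U) (hUconn : IsConnected U) (h0 : (0 : ℂ) ∈ U)
    (f g : ℂ → ℂ) (hf : DifferentiableOn ℂ f U) (hg : DifferentiableOn ℂ g U)
    (hg0 : g 0 = 0)
    (heq : ∀ z ∈ U, (1 + ‖f z‖ ^ 2) * (1 - ‖g z‖ ^ 2) = 1) :
    (∀ z ∈ U, f z = 0) ∧ (∀ z ∈ U, g z = 0) := by
  obtain ⟨r, hr, hrU⟩ := Metric.isOpen_iff.1 hU 0 h0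
  have hpol : ∀ z ∈ ball (0 : ℂ) r, ∀ w ∈ ball (0 : ℂ) r,
      (1 + f z * conj (f w)) * (1 - g z * conj (g w)) = 1 := fun z hz w hw ↦
    one_add_mul_conj_mul_one_sub_mul_conj_eq_one (hf.mono hrU) (hg.mono hrU)
      (fun z hz ↦ heq z (hrU hz)) hz hw
  have hfU : EqOn f 0 U := (hf.analyticOnNhd hU).eqOn_zero_of_preconnected_of_eventuallyEq_zero
    hUconn.isPreconnected h0 (eventuallyEq_zero_of_one_add_mul_conj_mul_one_sub_mul_conj_eq_one
      (hf.analyticOnNhd hU 0 h0) (hg.differentiableAt (hU.mem_nhds h0)).continuousAt hg0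
      (ball_mem_nhds 0 hr) hpol)
  refine ⟨hfU, fun z hz ↦ ?_⟩
  simpa [hfU hz] using heq z hz

/-- Umehara's theorem in dimension one: `(1+|f|²)(1−|g|²) = 1` forces `f ≡ 0` and `g ≡ 0`. -/
theorem stmt_14 (U : Set ℂ) (hU : IsOpen U) (hUconn : IsConnected U) (h0 : (0 : ℂ) ∈ U)
    (f g : ℂ → ℂ) (hf : DifferentiableOn ℂ f U) (hg : DifferentiableOn ℂ g U)
    (hf0 : f 0 = 0) (hg0 : g 0 = 0)
    (heq : ∀ z ∈ U, (1 + ‖f z‖ ^ 2) * (1 - ‖g z‖ ^ 2) = 1) :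
    (∀ z ∈ U, f z = 0) ∧ (∀ z ∈ U, g z = 0) :=
  stmt_14_general U hU hUconn h0 f g hf hg hg0 heq
end
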